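/- arXiv:2109.00592 — 6 statements merged into one kernel-verified Lean document; each statement's English description precedes it below -/
import Mathlib

section
/- Let A = ⊕_{n≥0} A_n be a Z_{≥0}-graded Noetherian ring generated over A_0 by homogeneous elements of degrees d_1,...,d_r, and let M be a finitely generated graded A-module. Then M is generated as an A-module by its elements of degree at most reg(M) + Σ_{i=1}^r (d_i − 1). -/
set_option maxHeartbeats 1000000
set_option synthInstance.maxHeartbeats 400000

noncomputable section

section Koszul

variable {A : Type*} [CommRing A] {M : Type*} [AddCommGroup M] [Module A M]

/-- The Koszul/Čech cochain differential (at cohomological spot `k`) on the powers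
`x₁ᵗ, …, x_rᵗ`, whose colimit over `t` computes the local cohomology `H^•_{(x₁,…,x_r)}(M)`. -/
noncomputable def koszDiff {r : ℕ} (x : Fin r → A) (t k : ℕ) :
    ({S : Finset (Fin r) // S.card = k} → M) →ₗ[A]
      ({S : Finset (Fin r) // S.card = k + 1} → M) where
  toFun f T := ∑ j ∈ T.1.attach,
    ((-1 : ℤ) ^ ((T.1.filter (fun i => i < j.1)).card)) •
      (x j.1 ^ t • f ⟨T.1.erase j.1, by simp [Finset.card_erase_of_mem j.2, T.2]⟩)
  map_add' := by
    intro f g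
    funext T
    simp [smul_add, Finset.sum_add_distrib]
  map_smul' := by
    intro a f
    funext T
    simp only [Pi.smul_apply, RingHom.id_apply, Finset.smul_sum]
    refine Finset.sum_congr rfl fun j _ => ?_
    rw [smul_comm a, smul_comm a]

/-- Coboundaries at cohomological spot `i`. -/
noncomputable def koszBoundary {r : ℕ} (x : Fin r → A) (t : ℕ) :
    (i : ℕ) → Submodule A ({S : Finset (Fin r) // S.card = i} → M)
  | 0 => ⊥
  | (j + 1) => LinearMap.range (koszDiff (M := M) x t j)

/-- Transition maps of the directed system of Koszul complexes. -/
noncomputable def koszTrans {r : ℕ} (x : Fin r → A) (t t' k : ℕ) :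
    ({S : Finset (Fin r) // S.card = k} → M) →ₗ[A]
      ({S : Finset (Fin r) // S.card = k} → M) where
  toFun f S := (∏ j ∈ S.1, x j ^ (t' - t)) • f S
  map_add' := by
    intro f g
    funext S
    simp [smul_add]
  map_smul' := by
    intro a f
    funext S
    simp only [Pi.smul_apply, RingHom.id_apply]
    rw [smul_comm]

/-- `H^i_{A₊}(M)` has a nonzero element of internal degree `n` : some degree-`n` Koszul
cocycle at a finite stage `t` survives (never becomes a coboundary) in the direct limit
computing graded local cohomology.  Here `dg j` is the degree of `x j` and `ℳ` is the grading
of `M`. -/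
def survivesNonzero {r : ℕ} (x : Fin r → A) (dg : Fin r → ℤ) (ℳ : ℤ → AddSubgroup M)
    (i : ℕ) (n : ℤ) : Prop :=
  ∃ t : ℕ, 1 ≤ t ∧ ∃ ξ : {S : Finset (Fin r) // S.card = i} → M,
    koszDiff (M := M) x t i ξ = 0 ∧
    (∀ S, ξ S ∈ ℳ (n + (t : ℤ) * ∑ j ∈ S.1, dg j)) ∧
    ∀ t', t ≤ t' → koszTrans (M := M) x t t' i ξ ∉ koszBoundary (M := M) x t' i

/-- `ρ` is an upper bound for the Castelnuovo–Mumford regularity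
`reg(M) = max{aᵢ(M) + i}`, i.e. the degree-`n` part of `H^i_{A₊}(M)` vanishes whenever
`n + i > ρ`. -/
def IsRegBound {r : ℕ} (x : Fin r → A) (dg : Fin r → ℤ) (ℳ : ℤ → AddSubgroup M)
    (ρ : ℤ) : Prop :=
  ∀ (i : ℕ) (n : ℤ), survivesNonzero x dg ℳ i n → n + (i : ℤ) ≤ ρ

end Koszul

section MainProof

variable {A : Type*} [CommRing A] {M : Type*} [AddCommGroup M] [Module A M]

variable {r : ℕ} (x : Fin r → A)

lemma koszTrans_self (t k : ℕ) (f : {S : Finset (Fin r) // S.card = k} → M) :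
    koszTrans (M := M) x t t k f = f := by
  funext S
  show (∏ j ∈ S.1, x j ^ (t - t)) • f S = f S
  simp

lemma koszTrans_comp (t t' t'' k : ℕ) (h1 : t ≤ t') (h2 : t' ≤ t'')
    (f : {S : Finset (Fin r) // S.card = k} → M) :
    koszTrans (M := M) x t' t'' k (koszTrans (M := M) x t t' k f)
      = koszTrans (M := M) x t t'' k f := by
  funext S
  show (∏ j ∈ S.1, x j ^ (t'' - t')) • (∏ j ∈ S.1, x j ^ (t' - t)) • f S
    = (∏ j ∈ S.1, x j ^ (t'' - t)) • f S
  rw [smul_smul, ← Finset.prod_mul_distrib]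
  congr 1
  refine Finset.prod_congr rfl fun j _ => ?_
  rw [← pow_add]
  congr 1
  omega

lemma koszTrans_koszDiff (t t' k : ℕ) (h : t ≤ t')
    (f : {S : Finset (Fin r) // S.card = k} → M) :
    koszTrans (M := M) x t t' (k + 1) (koszDiff (M := M) x t k f)
      = koszDiff (M := M) x t' k (koszTrans (M := M) x t t' k f) := by
  funext T
  show (∏ j ∈ T.1, x j ^ (t' - t)) • (∑ j ∈ T.1.attach,
      ((-1 : ℤ) ^ ((T.1.filter (fun i => i < j.1)).card)) • (x j.1 ^ t • f ⟨T.1.erase j.1, _⟩))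
    = ∑ j ∈ T.1.attach, ((-1 : ℤ) ^ ((T.1.filter (fun i => i < j.1)).card)) •
        (x j.1 ^ t' • (∏ i ∈ (T.1.erase j.1), x i ^ (t' - t)) • f ⟨T.1.erase j.1, _⟩)
  rw [Finset.smul_sum]
  refine Finset.sum_congr rfl fun j _ => ?_
  rw [smul_comm ((∏ j ∈ T.1, x j ^ (t' - t))) _, smul_smul, smul_smul]
  congr 2
  rw [← Finset.mul_prod_erase T.1 (fun i => x i ^ (t' - t)) j.2, mul_right_comm, ← pow_add]
  congr 2
  omega

lemma top_cc_zero (g : {S : Finset (Fin r) // S.card = r + 1} → M) : g = 0 := by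
  funext T
  exfalso
  have := Finset.card_le_univ T.1
  rw [T.2] at this
  simp at this

def sgnz {r : ℕ} (W : Finset (Fin r)) (j : Fin r) : ℤ := (-1) ^ (W.filter (fun i => i < j)).card

lemma sgnz_insert {r : ℕ} (V : Finset (Fin r)) (k j : Fin r) (hkV : k ∉ V) :
    sgnz (insert k V) j = (if k < j then -1 else 1) * sgnz V j := by
  unfold sgnz
  rw [Finset.filter_insert]
  by_cases hkj : k < j
  · have : k ∉ V.filter (fun i => i < j) := fun hc => hkV (Finset.mem_of_mem_filter _ hc)
    simp [hkj, Finset.card_insert_of_notMem this, pow_succ, mul_comm]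
  · simp [hkj]

lemma sgnz_mul_anti {r : ℕ} (V : Finset (Fin r)) (k l : Fin r) (hk : k ∉ V) (hl : l ∉ V)
    (hkl : k ≠ l) :
    sgnz V k * sgnz (insert k V) l = -(sgnz V l * sgnz (insert l V) k) := by
  rw [sgnz_insert V k l hk, sgnz_insert V l k hl]
  rcases lt_or_gt_of_ne hkl with h | h
  · rw [if_pos h, if_neg (by exact fun hc => absurd (lt_trans h hc) (lt_irrefl _))]
    ring
  · rw [if_neg (by exact fun hc => absurd (lt_trans h hc) (lt_irrefl _)), if_pos h]
    ring

lemma koszDiff_apply' (t k : ℕ) (f : {S : Finset (Fin r) // S.card = k} → M)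
    (T : {S : Finset (Fin r) // S.card = k + 1}) :
    koszDiff (M := M) x t k f T = ∑ j ∈ T.1.attach,
      sgnz T.1 j.1 • (x j.1 ^ t • f ⟨T.1.erase j.1, by
        simp [Finset.card_erase_of_mem j.2, T.2]⟩) := rfl

def pd (x : Fin r → A) (p q : ℕ)
    (F : {S : Finset (Fin r) // S.card = q + 1} → ({S' : Finset (Fin r) // S'.card = p} → M)) :
    {S : Finset (Fin r) // S.card = q} → ({S' : Finset (Fin r) // S'.card = p} → M) :=
  fun U => ∑ k : Fin r, if hk : k ∈ U.1 then 0 else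
    sgnz U.1 k • (x k • F ⟨insert k U.1, by
      rw [Finset.card_insert_of_notMem hk, U.2]⟩)

lemma pd_apply (p q : ℕ) (F) (U : {S : Finset (Fin r) // S.card = q})
    (S' : {S' : Finset (Fin r) // S'.card = p}) :
    pd (M := M) x p q F U S' = ∑ k : Fin r, if hk : k ∈ U.1 then 0 else
      sgnz U.1 k • (x k • F ⟨insert k U.1, by
        rw [Finset.card_insert_of_notMem hk, U.2]⟩ S') := by
  rw [pd]
  rw [Finset.sum_apply]
  congr 1
  funext kk
  split
  · rfl
  · rfl

lemma pd_sub (p q : ℕ) (F G) (U : {S : Finset (Fin r) // S.card = q}) :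
    pd (M := M) x p q (F - G) U = pd x p q F U - pd x p q G U := by
  funext S'
  simp only [Pi.sub_apply]
  rw [pd_apply, pd_apply, pd_apply, ← Finset.sum_sub_distrib]
  refine Finset.sum_congr rfl fun k _ => ?_
  split
  · simp
  · simp only [Pi.sub_apply, smul_sub]

lemma koszDiff_pd (t p q : ℕ) (F) (U : {S : Finset (Fin r) // S.card = q}) :
    koszDiff (M := M) x t p (pd x p q F U)
      = pd x (p + 1) q (fun W => koszDiff (M := M) x t p (F W)) U := by
  rw [pd, pd, map_sum]
  congr 1
  funext k
  split
  · simp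
  · rw [map_zsmul, map_smul]

lemma koszTrans_pd (t t' p q : ℕ) (F) (U : {S : Finset (Fin r) // S.card = q}) :
    koszTrans (M := M) x t t' p (pd x p q F U)
      = pd x p q (fun W => koszTrans (M := M) x t t' p (F W)) U := by
  rw [pd, pd, map_sum]
  congr 1
  funext k
  split
  · simp
  · rw [map_zsmul, map_smul]

lemma pd_pd (p q : ℕ)
    (F : {S : Finset (Fin r) // S.card = q + 1 + 1} → ({S' : Finset (Fin r) // S'.card = p} → M))
    (U : {S : Finset (Fin r) // S.card = q}) :
    pd x p q (pd x p (q + 1) F) U = 0 := by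
  funext S'
  rw [pd_apply]
  show (∑ k : Fin r, _) = (0 : M)
  have hrw : ∀ k : Fin r, (if hk : k ∈ U.1 then (0 : M) else
      sgnz U.1 k • (x k • pd x p (q+1) F ⟨insert k U.1, by
        rw [Finset.card_insert_of_notMem hk, U.2]⟩ S'))
      = ∑ l : Fin r, (if hk : k ∈ U.1 then 0 else if hl : l ∈ insert k U.1 then 0 else
          (sgnz U.1 k * sgnz (insert k U.1) l) •
            ((x k * x l) • F ⟨insert l (insert k U.1), by
              rw [Finset.card_insert_of_notMem hl, Finset.card_insert_of_notMem hk, U.2]⟩ S')) := by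
    intro k
    split
    · simp
    · rw [pd_apply, Finset.smul_sum, Finset.smul_sum]
      congr 1
      funext l
      split
      · simp
      · rw [smul_comm (x k), smul_smul, smul_comm (x k), smul_smul, mul_comm (x l)]
  rw [Finset.sum_congr rfl (fun k _ => hrw k), ← Finset.sum_product']
  refine Finset.sum_ninvolution (fun kl => (kl.2, kl.1)) ?_ ?_
    (fun a => Finset.mem_product.mpr ⟨Finset.mem_univ _, Finset.mem_univ _⟩) (fun a => rfl)
  · rintro ⟨k, l⟩
    dsimp only
    by_cases hk : k ∈ U.1
    · have hk' : k ∈ insert l U.1 := Finset.mem_insert_of_mem hk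
      rw [dif_pos hk, zero_add]
      by_cases hl : l ∈ U.1
      · rw [dif_pos hl]
      · rw [dif_neg hl, dif_pos hk']
    · by_cases hl : l ∈ U.1
      · have hl' : l ∈ insert k U.1 := Finset.mem_insert_of_mem hl
        rw [dif_pos hl, dif_neg hk, dif_pos hl', add_zero]
      · by_cases hkl : k = l
        · subst hkl
          rw [dif_neg hk, dif_pos (Finset.mem_insert_self k U.1), add_zero]
        · have hlk : l ∉ insert k U.1 := by simp [hl, Ne.symm hkl]
          have hkl' : k ∉ insert l U.1 := by simp [hk, hkl]
          rw [dif_neg hk, dif_neg hl, dif_neg hlk, dif_neg hkl']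
          have hsub : (⟨insert l (insert k U.1), by
              rw [Finset.card_insert_of_notMem hlk, Finset.card_insert_of_notMem hk, U.2]⟩ :
                {S : Finset (Fin r) // S.card = q + 1 + 1})
              = ⟨insert k (insert l U.1), by
              rw [Finset.card_insert_of_notMem hkl', Finset.card_insert_of_notMem hl, U.2]⟩ :=
            Subtype.ext (Finset.insert_comm _ _ _)
          rw [hsub, sgnz_mul_anti U.1 k l hk hl hkl, mul_comm (x l) (x k)]
          rw [neg_smul, neg_add_cancel]
  · rintro ⟨k, l⟩ h hc
    apply h
    have h1 : l = k := congrArg Prod.fst hc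
    rw [h1]
    dsimp only
    by_cases hk : k ∈ U.1
    · rw [dif_pos hk]
    · rw [dif_neg hk, dif_pos (Finset.mem_insert_self k U.1)]


lemma sgnz_insert_self {r : ℕ} (V : Finset (Fin r)) (k : Fin r) :
    sgnz (insert k V) k = sgnz V k := by
  unfold sgnz
  rw [Finset.filter_insert, if_neg (lt_irrefl k)]

def alphaF (x : Fin r → A) (m : M) (q : ℕ) :
    {S : Finset (Fin r) // S.card = q} → ({S' : Finset (Fin r) // S'.card = q} → M) :=
  fun S S' => if S.1 = S'.1 then (∏ i ∈ S.1, x i) ^ (max q 1 - 1) • m else 0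

lemma koszTrans_apply' (t t' k : ℕ) (f : {S : Finset (Fin r) // S.card = k} → M)
    (S : {S : Finset (Fin r) // S.card = k}) :
    koszTrans (M := M) x t t' k f S = (∏ j ∈ S.1, x j ^ (t' - t)) • f S := rfl

lemma alphaE (m : M) (q : ℕ) (U : {S : Finset (Fin r) // S.card = q}) :
    pd x (q + 1) q (alphaF x m (q + 1)) U
      = koszTrans (M := M) x (max q 1) (q + 1) (q + 1)
          (koszDiff (M := M) x (max q 1) q (alphaF x m q U)) := by
  set t := max q 1 with ht
  have ht1 : 1 ≤ t := le_max_right q 1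
  have ht2 : t ≤ q + 1 := by omega
  funext S'
  rw [pd_apply, koszTrans_apply', koszDiff_apply']
  by_cases hUS : U.1 ⊆ S'.1
  · -- there is a unique element k₀ of S' \ U
    have hcard : (S'.1 \ U.1).card = 1 := by
      rw [Finset.card_sdiff_of_subset hUS, S'.2, U.2]
      omega
    obtain ⟨k₀, hk₀⟩ := Finset.card_eq_one.mp hcard
    have hk₀S : k₀ ∈ S'.1 := by
      have : k₀ ∈ S'.1 \ U.1 := hk₀ ▸ Finset.mem_singleton_self k₀
      exact (Finset.mem_sdiff.mp this).1
    have hk₀U : k₀ ∉ U.1 := by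
      have : k₀ ∈ S'.1 \ U.1 := hk₀ ▸ Finset.mem_singleton_self k₀
      exact (Finset.mem_sdiff.mp this).2
    have hins : insert k₀ U.1 = S'.1 := by
      apply Finset.eq_of_subset_of_card_le
      · exact Finset.insert_subset hk₀S hUS
      · rw [Finset.card_insert_of_notMem hk₀U, S'.2, U.2]
    have hUerase : U.1 = S'.1.erase k₀ := by
      rw [← hins, Finset.erase_insert hk₀U]
    -- LHS: single term k₀
    rw [Finset.sum_eq_single k₀ ?_ ?_]
    rotate_left
    · intro b _ hb
      by_cases hbU : b ∈ U.1
      · rw [dif_pos hbU]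
      · rw [dif_neg hbU]
        have hni : insert b U.1 ≠ S'.1 := by
          intro hc
          apply hb
          have hbS : b ∈ S'.1 \ U.1 := Finset.mem_sdiff.mpr
            ⟨hc ▸ Finset.mem_insert_self b U.1, hbU⟩
          rw [hk₀] at hbS
          exact Finset.mem_singleton.mp hbS
        show sgnz U.1 b • (x b • alphaF x m (q+1) ⟨insert b U.1, _⟩ S') = 0
        rw [alphaF, if_neg hni, smul_zero, smul_zero]
    · intro hni
      exact absurd (Finset.mem_univ k₀) hni
    -- RHS: single term k₀ in the attach sum
    rw [Finset.sum_eq_single (⟨k₀, hk₀S⟩ : {j // j ∈ S'.1}) ?_ ?_]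
    rotate_left
    · intro b _ hb
      have hbne : b.1 ≠ k₀ := fun hc => hb (Subtype.ext hc)
      have hni : U.1 ≠ S'.1.erase b.1 := by
        intro hc
        have : k₀ ∈ S'.1.erase b.1 := Finset.mem_erase.mpr ⟨Ne.symm hbne, hk₀S⟩
        rw [← hc] at this
        exact hk₀U this
      show sgnz S'.1 b.1 • (x b.1 ^ t • alphaF x m q U ⟨S'.1.erase b.1, _⟩) = 0
      rw [alphaF, if_neg hni, smul_zero, smul_zero]
    · intro hni
      exact absurd (Finset.mem_attach _ _) hni
    -- now compare the two single terms
    rw [dif_neg hk₀U]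
    show sgnz U.1 k₀ • (x k₀ • alphaF x m (q+1) ⟨insert k₀ U.1, _⟩ S')
      = (∏ j ∈ S'.1, x j ^ (q + 1 - t)) •
          (sgnz S'.1 k₀ • (x k₀ ^ t • alphaF x m q U ⟨S'.1.erase k₀, _⟩))
    rw [alphaF, alphaF]
    rw [if_pos hins, if_pos hUerase]
    have hsgn : sgnz S'.1 k₀ = sgnz U.1 k₀ := by
      rw [← hins, sgnz_insert_self]
    rw [hsgn, smul_comm ((∏ j ∈ S'.1, x j ^ (q + 1 - t))) (sgnz U.1 k₀)]
    congr 1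
    -- scalar identity
    have hmax : max (q+1) 1 - 1 = q := by omega
    rw [hmax]
    have hP : ∏ j ∈ S'.1, x j = x k₀ * ∏ i ∈ U.1, x i := by
      rw [← hins, Finset.prod_insert hk₀U]
    have hPe : ∏ j ∈ S'.1, x j ^ (q + 1 - t) = (x k₀ * ∏ i ∈ U.1, x i) ^ (q + 1 - t) := by
      rw [Finset.prod_pow, hP]
    rw [smul_smul, smul_smul, smul_smul]
    congr 1
    show x k₀ * (∏ i ∈ insert k₀ U.1, x i) ^ q
      = (∏ j ∈ S'.1, x j ^ (q + 1 - t)) * x k₀ ^ t * (∏ i ∈ U.1, x i) ^ (t - 1)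
    rw [Finset.prod_insert hk₀U, hPe]
    have e1 : q + 1 - t + t = q + 1 := by omega
    have e2 : q + 1 - t + (t - 1) = q := by omega
    have key : (x k₀) ^ (q+1-t) * (∏ i ∈ U.1, x i) ^ (q+1-t) *
        ((x k₀) ^ t * (∏ i ∈ U.1, x i) ^ (t-1))
        = (x k₀) ^ ((q+1-t)+t) * (∏ i ∈ U.1, x i) ^ ((q+1-t)+(t-1)) := by
      rw [pow_add, pow_add]; ring
    rw [e1, e2] at key
    rw [mul_pow, mul_pow, mul_assoc, key]
    ring
  · -- both sides vanish
    rw [Finset.sum_eq_zero, Finset.sum_eq_zero, smul_zero]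
    · intro j _
      have hni : U.1 ≠ S'.1.erase j.1 := by
        intro hc
        exact hUS (hc ▸ Finset.erase_subset _ _)
      show sgnz S'.1 j.1 • (x j.1 ^ t • alphaF x m q U ⟨S'.1.erase j.1, _⟩) = 0
      rw [alphaF, if_neg hni, smul_zero, smul_zero]
    · intro k _
      by_cases hkU : k ∈ U.1
      · rw [dif_pos hkU]
      · rw [dif_neg hkU]
        have hni : insert k U.1 ≠ S'.1 := by
          intro hc
          exact hUS (hc ▸ (Finset.subset_insert k U.1))
        show sgnz U.1 k • (x k • alphaF x m (q+1) ⟨insert k U.1, _⟩ S') = 0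
        rw [alphaF, if_neg hni, smul_zero, smul_zero]


section ProjPart

variable (ℳ : ℤ → AddSubgroup M) [DirectSum.Decomposition ℳ]

def projM (k : ℤ) (u : M) : M := ((DirectSum.decompose ℳ u) k : M)

lemma projM_mem (k : ℤ) (u : M) : projM ℳ k u ∈ ℳ k := SetLike.coe_mem _

lemma projM_of_mem {k : ℤ} {u : M} (h : u ∈ ℳ k) : projM ℳ k u = u :=
  DirectSum.decompose_of_mem_same ℳ h

lemma projM_of_mem_ne {k j : ℤ} {u : M} (h : u ∈ ℳ j) (hne : j ≠ k) : projM ℳ k u = 0 :=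
  DirectSum.decompose_of_mem_ne ℳ h hne

def projMHom (k : ℤ) : M →+ M where
  toFun := projM ℳ k
  map_zero' := by simp [projM]
  map_add' := fun u v => by simp [projM, DirectSum.decompose_add]

variable (𝒜 : ℤ → AddSubgroup A) [GradedRing 𝒜]

lemma projM_smul_homog
    (hsmul : ∀ (i j : ℤ) (a : A) (mm : M), a ∈ 𝒜 i → mm ∈ ℳ j → a • mm ∈ ℳ (i + j))
    {i : ℤ} {a : A} (ha : a ∈ 𝒜 i) (k : ℤ) (u : M) :
    projM ℳ k (a • u) = a • projM ℳ (k - i) u := by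
  classical
  conv_lhs => rw [← DirectSum.sum_support_decompose ℳ u]
  rw [Finset.smul_sum]
  show projMHom ℳ k _ = _
  rw [map_sum]
  have hterm : ∀ j ∈ (DirectSum.decompose ℳ u).support,
      projMHom ℳ k (a • ((DirectSum.decompose ℳ u) j : M))
        = if j = k - i then a • ((DirectSum.decompose ℳ u) j : M) else 0 := by
    intro j _
    by_cases hj : j = k - i
    · rw [if_pos hj]
      exact projM_of_mem ℳ (by
        have := hsmul i j a ((DirectSum.decompose ℳ u) j : M) ha (SetLike.coe_mem _)
        rwa [show i + j = k by omega] at this)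
    · rw [if_neg hj]
      exact projM_of_mem_ne ℳ (hsmul i j a ((DirectSum.decompose ℳ u) j : M) ha (SetLike.coe_mem _)) (by omega)
  rw [Finset.sum_congr rfl hterm, Finset.sum_ite_eq' _ (k - i) _]
  by_cases hmem : k - i ∈ (DirectSum.decompose ℳ u).support
  · rw [if_pos hmem]; rfl
  · rw [if_neg hmem]
    have : ((DirectSum.decompose ℳ u) (k - i) : M) = 0 := by
      rw [DFinsupp.notMem_support_iff.mp hmem]; rfl
    rw [projM, this, smul_zero]

end ProjPart

section GradedMem

variable (𝒜 : ℤ → AddSubgroup A) [GradedRing 𝒜] (d : Fin r → ℤ)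

lemma pow_prod_mem (hx : ∀ i, x i ∈ 𝒜 (d i)) (e : ℕ) (W : Finset (Fin r)) :
    (∏ j ∈ W, x j ^ e) ∈ 𝒜 ((e : ℤ) * ∑ j ∈ W, d j) := by
  classical
  induction W using Finset.cons_induction with
  | empty => simpa using SetLike.one_mem_graded 𝒜
  | cons a s ha ih =>
      rw [Finset.prod_cons, Finset.sum_cons, mul_add]
      exact SetLike.mul_mem_graded
        (by simpa [nsmul_eq_mul] using SetLike.pow_mem_graded e (hx a)) ih

lemma prod_pow_mem (hx : ∀ i, x i ∈ 𝒜 (d i)) (e : ℕ) (W : Finset (Fin r)) :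
    ((∏ j ∈ W, x j) ^ e) ∈ 𝒜 ((e : ℤ) * ∑ j ∈ W, d j) := by
  have h1 : (∏ j ∈ W, x j) ∈ 𝒜 (∑ j ∈ W, d j) := by
    simpa using pow_prod_mem x 𝒜 d hx 1 W
  simpa [smul_eq_mul, zsmul_eq_mul] using SetLike.pow_mem_graded e h1

lemma pow_single_mem (hx : ∀ i, x i ∈ 𝒜 (d i)) (e : ℕ) (k : Fin r) :
    (x k ^ e) ∈ 𝒜 ((e : ℤ) * d k) := by
  simpa [nsmul_eq_mul] using SetLike.pow_mem_graded e (hx k)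

end GradedMem


section Chase

variable (𝒜 : ℤ → AddSubgroup A) [GradedRing 𝒜]
variable (ℳ : ℤ → AddSubgroup M) [DirectSum.Decomposition ℳ]
variable (d : Fin r → ℤ)

set_option linter.unusedSectionVars false

lemma chaseD
    (hx : ∀ i, x i ∈ 𝒜 (d i)) (hd : ∀ i, 1 ≤ d i)
    (hsmul : ∀ (i j : ℤ) (a : A) (mm : M), a ∈ 𝒜 i → mm ∈ ℳ j → a • mm ∈ ℳ (i + j))
    (ρ : ℤ)
    (hρ : ∀ (i : ℕ) (nn : ℤ), survivesNonzero x d ℳ i nn → nn + (i : ℤ) ≤ ρ)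
    (n : ℤ) (hn : ρ + ∑ i, (d i - 1) < n) (m : M) (hm : m ∈ ℳ n) :
    ∀ (j q : ℕ), q + j = r →
    ∃ T : ℕ, max q 1 ≤ T ∧
    ∃ ε : {S : Finset (Fin r) // S.card = q + 1} → ({S' : Finset (Fin r) // S'.card = q} → M),
      (∀ S S', ε S S' ∈ ℳ ((n - ∑ k ∈ S.1, d k) + (T : ℤ) * ∑ i ∈ S'.1, d i)) ∧
      (∀ U : {S : Finset (Fin r) // S.card = q},
        koszDiff (M := M) x T q
          (koszTrans (M := M) x (max q 1) T q (alphaF x m q U) - pd x q q ε U) = 0) := by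
  intro j
  induction j with
  | zero =>
    intro q hq
    have hqr : r = q := by omega
    subst hqr
    exact ⟨max r 1, le_refl _, 0, fun S S' => by exact zero_mem _, fun U => top_cc_zero _⟩
  | succ j ih =>
    intro q hq
    obtain ⟨T', hT', ε', hε'h, hε'c⟩ := ih (q + 1) (by omega)
    have hq1 : max (q+1) 1 = q + 1 := max_eq_left (by omega)
    have hmxT' : q + 1 ≤ T' := by rw [hq1] at hT'; exact hT'
    set γ : {S : Finset (Fin r) // S.card = q + 1} →
        ({S' : Finset (Fin r) // S'.card = q + 1} → M) :=
      fun S => koszTrans (M := M) x (max (q+1) 1) T' (q+1) (alphaF x m (q+1) S)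
        - pd x (q+1) (q+1) ε' S with hγdef
    have hγc : ∀ S, koszDiff (M := M) x T' (q+1) (γ S) = 0 := fun S => hε'c S
    -- homogeneity of γ
    have hγh : ∀ S S', γ S S' ∈ ℳ ((n - ∑ k ∈ S.1, d k) + (T' : ℤ) * ∑ i ∈ S'.1, d i) := by
      intro S S'
      have h1 : koszTrans (M := M) x (max (q+1) 1) T' (q+1) (alphaF x m (q+1) S) S'
          ∈ ℳ ((n - ∑ k ∈ S.1, d k) + (T' : ℤ) * ∑ i ∈ S'.1, d i) := by
        rw [koszTrans_apply']
        by_cases hSS : S.1 = S'.1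
        · rw [alphaF, if_pos hSS]
          have hmem2 := prod_pow_mem x 𝒜 d hx (max (q+1) 1 - 1) S.1
          have h3 := hsmul _ _ _ _ hmem2 hm
          have hmem1 := pow_prod_mem x 𝒜 d hx (T' - max (q+1) 1) S'.1
          have h4 := hsmul _ _ _ _ hmem1 h3
          have hsum : ∑ k ∈ S.1, d k = ∑ i ∈ S'.1, d i := by rw [hSS]
          have hidx : ((T' - max (q+1) 1 : ℕ) : ℤ) * ∑ i ∈ S'.1, d i
              + (((max (q+1) 1 - 1 : ℕ) : ℤ) * ∑ k ∈ S.1, d k + n)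
              = (n - ∑ k ∈ S.1, d k) + (T' : ℤ) * ∑ i ∈ S'.1, d i := by
            rw [hq1, hsum]
            have c1 : ((T' - (q+1) : ℕ) : ℤ) = (T' : ℤ) - ((q+1 : ℕ) : ℤ) :=
              Nat.cast_sub hmxT'
            have c2 : ((q + 1 - 1 : ℕ) : ℤ) = (q : ℤ) := by norm_num
            rw [c1, c2]
            push_cast
            ring
          exact hidx ▸ h4
        · rw [alphaF, if_neg hSS, smul_zero]
          exact zero_mem _
      have h2 : pd x (q+1) (q+1) ε' S S'
          ∈ ℳ ((n - ∑ k ∈ S.1, d k) + (T' : ℤ) * ∑ i ∈ S'.1, d i) := by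
        rw [pd_apply]
        refine AddSubgroup.sum_mem _ fun k _ => ?_
        split
        · exact zero_mem _
        · rename_i hk
          refine AddSubgroup.zsmul_mem _ ?_ _
          have h5 := hsmul _ _ _ _ (hx k)
            (hε'h ⟨insert k S.1, by rw [Finset.card_insert_of_notMem hk, S.2]⟩ S')
          have hidx : d k + ((n - ∑ kk ∈ insert k S.1, d kk) + (T' : ℤ) * ∑ i ∈ S'.1, d i)
              = (n - ∑ kk ∈ S.1, d kk) + (T' : ℤ) * ∑ i ∈ S'.1, d i := by
            rw [Finset.sum_insert hk]
            ring
          exact hidx ▸ h5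
      have : γ S S' = koszTrans (M := M) x (max (q+1) 1) T' (q+1) (alphaF x m (q+1) S) S'
          - pd x (q+1) (q+1) ε' S S' := rfl
      rw [this]
      exact sub_mem h1 h2
    -- the class at level q+1 dies in the colimit
    have harith : ∀ S : {S : Finset (Fin r) // S.card = q + 1},
        ρ < (n - ∑ k ∈ S.1, d k) + ((q + 1 : ℕ) : ℤ) := by
      intro S
      have h1 : ∑ k ∈ S.1, (d k - 1) ≤ ∑ k, (d k - 1) :=
        Finset.sum_le_sum_of_subset_of_nonneg (Finset.subset_univ _)
          (fun i _ _ => by linarith [hd i])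
      have h2 : ∑ k ∈ S.1, (d k - 1) = ∑ k ∈ S.1, d k - ((q + 1 : ℕ) : ℤ) := by
        rw [Finset.sum_sub_distrib]
        simp [S.2]
      rw [h2] at h1
      linarith
    have hdies : ∀ S : {S : Finset (Fin r) // S.card = q + 1},
        ∃ t', T' ≤ t' ∧ ∃ η : {S' : Finset (Fin r) // S'.card = q} → M,
          koszDiff (M := M) x t' q η = koszTrans (M := M) x T' t' (q+1) (γ S) := by
      intro S
      have hns : ¬ survivesNonzero x d ℳ (q+1) (n - ∑ k ∈ S.1, d k) := by
        intro hs
        have hb := hρ _ _ hs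
        have ha := harith S
        linarith
      rw [survivesNonzero] at hns
      push_neg at hns
      have h1T' : 1 ≤ T' := le_trans (by omega) hmxT'
      obtain ⟨t', ht', hmem⟩ := hns T' h1T' (γ S) (hγc S) (fun S' => hγh S S')
      have hrange : koszBoundary (M := M) x t' (q+1)
          = LinearMap.range (koszDiff (M := M) x t' q) := rfl
      rw [hrange] at hmem
      obtain ⟨η, hη⟩ := hmem
      exact ⟨t', ht', η, hη⟩
    choose tS h1S ηS hηS using hdies
    set T'' := max T' (Finset.univ.sup tS) with hT''def
    have hT'T'' : T' ≤ T'' := le_max_left _ _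
    have htST'' : ∀ S, tS S ≤ T'' :=
      fun S => le_trans (Finset.le_sup (Finset.mem_univ S)) (le_max_right _ _)
    set ε : {S : Finset (Fin r) // S.card = q + 1} →
        ({S' : Finset (Fin r) // S'.card = q} → M) :=
      fun S S' => projM ℳ ((n - ∑ k ∈ S.1, d k) + (T'' : ℤ) * ∑ i ∈ S'.1, d i)
        (koszTrans (M := M) x (tS S) T'' q (ηS S) S') with hεdef
    -- key: d ε = trans γ
    have hεc : ∀ S, koszDiff (M := M) x T'' q (ε S)
        = koszTrans (M := M) x T' T'' (q+1) (γ S) := by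
      intro S
      have hbase : koszDiff (M := M) x T'' q (koszTrans (M := M) x (tS S) T'' q (ηS S))
          = koszTrans (M := M) x T' T'' (q+1) (γ S) := by
        rw [← koszTrans_koszDiff x (tS S) T'' q (htST'' S), hηS S,
          koszTrans_comp x T' (tS S) T'' (q+1) (h1S S) (htST'' S)]
      funext Tt
      have hbT := congrFun hbase Tt
      rw [koszDiff_apply'] at hbT
      rw [koszDiff_apply']
      have hRmem : koszTrans (M := M) x T' T'' (q+1) (γ S) Tt
          ∈ ℳ ((n - ∑ k ∈ S.1, d k) + (T'' : ℤ) * ∑ i ∈ Tt.1, d i) := by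
        rw [koszTrans_apply']
        have h5 := hsmul _ _ _ _ (pow_prod_mem x 𝒜 d hx (T'' - T') Tt.1) (hγh S Tt)
        have hidx : ((T'' - T' : ℕ) : ℤ) * ∑ i ∈ Tt.1, d i
            + ((n - ∑ k ∈ S.1, d k) + (T' : ℤ) * ∑ i ∈ Tt.1, d i)
            = (n - ∑ k ∈ S.1, d k) + (T'' : ℤ) * ∑ i ∈ Tt.1, d i := by
          have c1 : ((T'' - T' : ℕ) : ℤ) = (T'' : ℤ) - (T' : ℤ) :=
            Nat.cast_sub hT'T''
          rw [c1]; ring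
        exact hidx ▸ h5
      have hstep : ∀ jj ∈ Tt.1.attach,
          sgnz Tt.1 jj.1 • (x jj.1 ^ T'' • ε S ⟨Tt.1.erase jj.1, by
            simp [Finset.card_erase_of_mem jj.2, Tt.2]⟩)
          = projMHom ℳ ((n - ∑ k ∈ S.1, d k) + (T'' : ℤ) * ∑ i ∈ Tt.1, d i)
              (sgnz Tt.1 jj.1 • (x jj.1 ^ T'' •
                koszTrans (M := M) x (tS S) T'' q (ηS S) ⟨Tt.1.erase jj.1, by
                  simp [Finset.card_erase_of_mem jj.2, Tt.2]⟩)) := by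
        intro jj _
        rw [map_zsmul]
        congr 1
        have hproj := projM_smul_homog ℳ 𝒜 hsmul (pow_single_mem x 𝒜 d hx T'' jj.1)
          ((n - ∑ k ∈ S.1, d k) + (T'' : ℤ) * ∑ i ∈ Tt.1, d i)
          (koszTrans (M := M) x (tS S) T'' q (ηS S) ⟨Tt.1.erase jj.1, by
            simp [Finset.card_erase_of_mem jj.2, Tt.2]⟩)
        have hidx2 : (n - ∑ k ∈ S.1, d k) + (T'' : ℤ) * ∑ i ∈ Tt.1, d i
            - (T'' : ℤ) * d jj.1
            = (n - ∑ k ∈ S.1, d k) + (T'' : ℤ) * ∑ i ∈ Tt.1.erase jj.1, d i := by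
          have := Finset.sum_erase_add Tt.1 d jj.2
          have h7 : ∑ i ∈ Tt.1.erase jj.1, d i = ∑ i ∈ Tt.1, d i - d jj.1 := by linarith
          rw [h7]; ring
        rw [hidx2] at hproj
        exact hproj.symm
      rw [Finset.sum_congr rfl hstep, ← map_sum, hbT]
      exact projM_of_mem ℳ hRmem
    -- final assembly
    refine ⟨T'', le_trans (le_trans (by omega : max q 1 ≤ q + 1) hmxT') hT'T'', ε,
      fun S S' => projM_mem ℳ _ _, ?_⟩
    intro U
    rw [map_sub]
    have hmxT'' : max q 1 ≤ T'' := le_trans (le_trans (by omega) hmxT') hT'T''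
    have hA : koszDiff (M := M) x T'' q (koszTrans (M := M) x (max q 1) T'' q (alphaF x m q U))
        = koszTrans (M := M) x (max q 1) T'' (q+1)
            (koszDiff (M := M) x (max q 1) q (alphaF x m q U)) :=
      (koszTrans_koszDiff x (max q 1) T'' q hmxT'' (alphaF x m q U)).symm
    have hB1 : koszDiff (M := M) x T'' q (pd x q q ε U)
        = pd x (q+1) q (fun W => koszDiff (M := M) x T'' q (ε W)) U := koszDiff_pd x T'' q q ε U
    have hB2 : (fun W => koszDiff (M := M) x T'' q (ε W))
        = fun W => koszTrans (M := M) x T' T'' (q+1) (γ W) := funext hεc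
    have hB3 : pd x (q+1) q (fun W => koszTrans (M := M) x T' T'' (q+1) (γ W)) U
        = koszTrans (M := M) x T' T'' (q+1) (pd x (q+1) q γ U) :=
      (koszTrans_pd x T' T'' (q+1) q γ U).symm
    have hγFG : γ = (fun S => koszTrans (M := M) x (max (q+1) 1) T' (q+1) (alphaF x m (q+1) S))
        - pd x (q+1) (q+1) ε' := rfl
    have hB4 : pd x (q+1) q γ U
        = pd x (q+1) q
            (fun S => koszTrans (M := M) x (max (q+1) 1) T' (q+1) (alphaF x m (q+1) S)) U
          - pd x (q+1) q (pd x (q+1) (q+1) ε') U := by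
      rw [hγFG]; exact pd_sub x (q+1) q _ _ U
    have hB5 : pd x (q+1) q (pd x (q+1) (q+1) ε') U = 0 := pd_pd x (q+1) q ε' U
    have hB6 : pd x (q+1) q
          (fun S => koszTrans (M := M) x (max (q+1) 1) T' (q+1) (alphaF x m (q+1) S)) U
        = koszTrans (M := M) x (max (q+1) 1) T' (q+1) (pd x (q+1) q (alphaF x m (q+1)) U) :=
      (koszTrans_pd x (max (q+1) 1) T' (q+1) q (alphaF x m (q+1)) U).symm
    have hB7 := alphaE x m q U
    rw [hA, hB1, hB2, hB3, hB4, hB5, hB6, hB7, sub_zero, hq1]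
    rw [koszTrans_comp x (max q 1) (q+1) T' (q+1) (by omega) hmxT',
      koszTrans_comp x (max q 1) T' T'' (q+1) (le_trans (by omega) hmxT') hT'T'']
    exact sub_self _

end Chase


section Endgame

variable (𝒜 : ℤ → AddSubgroup A) [GradedRing 𝒜]
variable (ℳ : ℤ → AddSubgroup M) [DirectSum.Decomposition ℳ]
variable (d : Fin r → ℤ)

set_option linter.unusedSectionVars false

lemma step_gen
    (hx : ∀ i, x i ∈ 𝒜 (d i)) (hd : ∀ i, 1 ≤ d i)
    (hsmul : ∀ (i j : ℤ) (a : A) (mm : M), a ∈ 𝒜 i → mm ∈ ℳ j → a • mm ∈ ℳ (i + j))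
    (ρ : ℤ)
    (hρ : ∀ (i : ℕ) (nn : ℤ), survivesNonzero x d ℳ i nn → nn + (i : ℤ) ≤ ρ)
    (n : ℤ) (hn : ρ + ∑ i, (d i - 1) < n) (m : M) (hm : m ∈ ℳ n) :
    ∃ e : Fin r → M, (∀ k, e k ∈ ℳ (n - d k)) ∧ m = ∑ k, x k • e k := by
  obtain ⟨T, hT, ε, hεh, hεc⟩ :=
    chaseD x 𝒜 ℳ d hx hd hsmul ρ hρ n hn m hm r 0 (by omega)
  have h1T : 1 ≤ T := le_trans (by omega) hT
  set U0 : {S : Finset (Fin r) // S.card = 0} := ⟨∅, Finset.card_empty⟩ with hU0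
  set ξ : {S' : Finset (Fin r) // S'.card = 0} → M :=
    koszTrans (M := M) x (max 0 1) T 0 (alphaF x m 0 U0) - pd x 0 0 ε U0 with hξ
  have hclosed : koszDiff (M := M) x T 0 ξ = 0 := hεc U0
  have hsub : ∀ S' : {S' : Finset (Fin r) // S'.card = 0}, S' = U0 := by
    intro S'
    apply Subtype.ext
    rw [Finset.card_eq_zero.mp S'.2]
  have hval : ξ U0 = m - ∑ k : Fin r, x k • ε ⟨{k}, Finset.card_singleton k⟩ U0 := by
    show koszTrans (M := M) x (max 0 1) T 0 (alphaF x m 0 U0) U0 - pd x 0 0 ε U0 U0 = _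
    congr 1
    · rw [koszTrans_apply']
      show (∏ j ∈ (∅ : Finset (Fin r)), x j ^ (T - max 0 1)) • (alphaF x m 0 U0 U0) = m
      rw [Finset.prod_empty, one_smul, alphaF, if_pos rfl]
      show (∏ i ∈ (∅ : Finset (Fin r)), x i) ^ (max 0 1 - 1) • m = m
      simp
    · rw [pd_apply]
      refine Finset.sum_congr rfl fun k _ => ?_
      rw [dif_neg (Finset.notMem_empty k)]
      show sgnz (∅ : Finset (Fin r)) k • (x k • ε ⟨insert k (∅ : Finset (Fin r)), _⟩ U0)
        = x k • ε ⟨{k}, Finset.card_singleton k⟩ U0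
      have h1 : sgnz (∅ : Finset (Fin r)) k = 1 := by simp [sgnz]
      have h2 : (⟨insert k (∅ : Finset (Fin r)), by
            rw [Finset.card_insert_of_notMem (Finset.notMem_empty k), Finset.card_empty]⟩ :
          {S : Finset (Fin r) // S.card = 0 + 1})
          = ⟨{k}, Finset.card_singleton k⟩ := Subtype.ext (by simp)
      rw [h1, one_smul, h2]
  have hemem : ∀ k : Fin r, ε ⟨{k}, Finset.card_singleton k⟩ U0 ∈ ℳ (n - d k) := by
    intro k
    have h5 := hεh ⟨{k}, Finset.card_singleton k⟩ U0
    have hidx : (n - ∑ kk ∈ ({k} : Finset (Fin r)), d kk)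
        + (T : ℤ) * ∑ i ∈ (U0.1 : Finset (Fin r)), d i = n - d k := by
      rw [Finset.sum_singleton]
      show n - d k + (T : ℤ) * ∑ i ∈ (∅ : Finset (Fin r)), d i = n - d k
      rw [Finset.sum_empty]
      ring
    exact hidx ▸ h5
  have hw : ξ U0 = 0 := by
    by_contra hw
    have hsv : survivesNonzero x d ℳ 0 n := by
      refine ⟨T, h1T, ξ, hclosed, ?_, ?_⟩
      · intro S'
        rw [hsub S']
        have hidx : n + (T : ℤ) * ∑ j ∈ (U0.1 : Finset (Fin r)), d j = n := by
          show n + (T : ℤ) * ∑ j ∈ (∅ : Finset (Fin r)), d j = n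
          rw [Finset.sum_empty]; ring
        rw [hidx, hval]
        refine sub_mem hm (AddSubgroup.sum_mem _ fun k _ => ?_)
        have h5 := hsmul _ _ _ _ (hx k) (hemem k)
        have hidx2 : d k + (n - d k) = n := by ring
        exact hidx2 ▸ h5
      · intro t' ht' hmem
        have hbot : koszBoundary (M := M) x t' 0 = ⊥ := rfl
        rw [hbot, Submodule.mem_bot] at hmem
        apply hw
        have h6 := congrFun hmem U0
        rw [koszTrans_apply'] at h6
        have h7 : ((U0.1 : Finset (Fin r))) = (∅ : Finset (Fin r)) := rfl
        rw [h7, Finset.prod_empty, one_smul] at h6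
        exact h6
    have hcon := hρ 0 n hsv
    have hnn : (0 : ℤ) ≤ ∑ i, (d i - 1) := Finset.sum_nonneg fun i _ => by linarith [hd i]
    push_cast at hcon
    linarith
  refine ⟨fun k => ε ⟨{k}, Finset.card_singleton k⟩ U0, hemem, ?_⟩
  have := hval.symm.trans hw
  have h8 : m - ∑ k : Fin r, x k • ε ⟨{k}, Finset.card_singleton k⟩ U0 = 0 := this
  exact (sub_eq_zero.mp h8)
  
end Endgame


section Final

variable (𝒜 : ℤ → AddSubgroup A) [GradedRing 𝒜]
variable (ℳ : ℤ → AddSubgroup M) [DirectSum.Decomposition ℳ]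
variable (d : Fin r → ℤ)

set_option linter.unusedSectionVars false

lemma exists_bound [Module.Finite A M]
    (hneg : ∀ nn : ℤ, nn < 0 → 𝒜 nn = ⊥)
    (hsmul : ∀ (i j : ℤ) (a : A) (mm : M), a ∈ 𝒜 i → mm ∈ ℳ j → a • mm ∈ ℳ (i + j)) :
    ∃ B : ℤ, ∀ k : ℤ, k < B → ∀ u ∈ ℳ k, u = 0 := by
  classical
  obtain ⟨G, hG⟩ := Module.Finite.fg_top (R := A) (M := M)
  set D : Finset ℤ := G.biUnion (fun g => (DirectSum.decompose ℳ g).support) with hD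
  set B : ℤ := if h : D.Nonempty then D.min' h else 0 with hBdef
  have hBle : ∀ g ∈ G, ∀ l ∈ (DirectSum.decompose ℳ g).support, B ≤ l := by
    intro g hg l hl
    have hlD : l ∈ D := Finset.mem_biUnion.mpr ⟨g, hg, hl⟩
    rw [hBdef, dif_pos ⟨l, hlD⟩]
    exact Finset.min'_le _ _ hlD
  have hspan : ∀ v, v ∈ Submodule.span A (G : Set M) → ∀ kk : ℤ, kk < B → projM ℳ kk v = 0 := by
    intro v hv
    induction hv using Submodule.span_induction with
    | mem g hg =>
      intro kk hkk
      have hns : kk ∉ (DirectSum.decompose ℳ g).support :=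
        fun hc => absurd (hBle g hg kk hc) (by omega)
      show ((DirectSum.decompose ℳ g) kk : M) = 0
      rw [DFinsupp.notMem_support_iff.mp hns]
      rfl
    | zero =>
      intro kk _
      show ((DirectSum.decompose ℳ (0 : M)) kk : M) = 0
      rw [DirectSum.decompose_zero]
      rfl
    | add v w hv hw ihv ihw =>
      intro kk hkk
      rw [show projM ℳ kk (v + w) = projM ℳ kk v + projM ℳ kk w from
        map_add (projMHom ℳ kk) v w, ihv kk hkk, ihw kk hkk, add_zero]
    | smul a v hv ihv =>
      intro kk hkk
      conv_lhs => rw [← DirectSum.sum_support_decompose 𝒜 a, Finset.sum_smul]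
      rw [show projM ℳ kk (∑ i ∈ (DirectSum.decompose 𝒜 a).support,
            ((DirectSum.decompose 𝒜 a) i : A) • v)
          = ∑ i ∈ (DirectSum.decompose 𝒜 a).support,
              projMHom ℳ kk (((DirectSum.decompose 𝒜 a) i : A) • v) from
        map_sum (projMHom ℳ kk) _ _]
      refine Finset.sum_eq_zero fun i hi => ?_
      have hi0 : (0 : ℤ) ≤ i := by
        by_contra hneg'
        have h0 : 𝒜 i = ⊥ := hneg i (by omega)
        have : ((DirectSum.decompose 𝒜 a) i : A) = 0 := by
          have h2 : ((DirectSum.decompose 𝒜 a) i : A) ∈ (⊥ : AddSubgroup A) := by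
            rw [← h0]
            exact SetLike.coe_mem _
          exact AddSubgroup.mem_bot.mp h2
        exact (DFinsupp.mem_support_iff.mp hi) (Subtype.ext this)
      show projM ℳ kk (((DirectSum.decompose 𝒜 a) i : A) • v) = 0
      rw [projM_smul_homog ℳ 𝒜 hsmul (SetLike.coe_mem _) kk v, ihv (kk - i) (by omega),
        smul_zero]
  refine ⟨B, fun k hk u hu => ?_⟩
  have huspan : u ∈ Submodule.span A (G : Set M) := by rw [hG]; trivial
  have := hspan u huspan k hk
  rw [projM_of_mem ℳ hu] at this
  exact this

lemma main_span [Module.Finite A M]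
    (hneg : ∀ nn : ℤ, nn < 0 → 𝒜 nn = ⊥)
    (hx : ∀ i, x i ∈ 𝒜 (d i)) (hd : ∀ i, 1 ≤ d i)
    (hsmul : ∀ (i j : ℤ) (a : A) (mm : M), a ∈ 𝒜 i → mm ∈ ℳ j → a • mm ∈ ℳ (i + j))
    (ρ : ℤ)
    (hρ : ∀ (i : ℕ) (nn : ℤ), survivesNonzero x d ℳ i nn → nn + (i : ℤ) ≤ ρ) :
    Submodule.span A (⋃ nn ∈ Set.Iic (ρ + ∑ i, (d i - 1)), ((ℳ nn : Set M))) = ⊤ := by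
  classical
  obtain ⟨B, hB⟩ := exists_bound 𝒜 ℳ hneg hsmul
  set σ : ℤ := ρ + ∑ i, (d i - 1) with hσdef
  set N := Submodule.span A (⋃ nn ∈ Set.Iic σ, ((ℳ nn : Set M))) with hNdef
  have hmemN : ∀ (j : ℕ) (nn : ℤ), nn < B + j → ∀ u ∈ ℳ nn, u ∈ N := by
    intro j
    induction j with
    | zero =>
      intro nn hnn u hu
      rw [hB nn (by simpa using hnn) u hu]
      exact zero_mem _
    | succ j ih =>
      intro nn hnn u hu
      by_cases hle : nn ≤ σ
      · exact Submodule.subset_span (Set.mem_biUnion hle hu)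
      · obtain ⟨e, he, hue⟩ := step_gen x 𝒜 ℳ d hx hd hsmul ρ hρ nn (by omega) u hu
        rw [hue]
        refine Submodule.sum_mem _ fun k _ => Submodule.smul_mem _ _ ?_
        refine ih (nn - d k) ?_ _ (he k)
        have := hd k
        push_cast at hnn ⊢
        omega
  rw [eq_top_iff]
  intro u _
  rw [← DirectSum.sum_support_decompose ℳ u]
  refine Submodule.sum_mem _ fun l _ => ?_
  obtain ⟨j, hj⟩ : ∃ j : ℕ, l < B + j := ⟨(l - B).toNat + 1, by omega⟩
  exact hmemN j l hj _ (SetLike.coe_mem _)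

end Final

end MainProof


/-- Let `A` be a `ℤ≥0`-graded Noetherian ring whose irrelevant ideal is
generated by homogeneous elements `x i` of degrees `d i ≥ 1`, and let `M` be a finitely
generated graded `A`-module.  Then `M` is generated by its elements of degree at most
`reg(M) + ∑ (d i − 1)` : for any upper bound `ρ` of `reg(M) = max{aᵢ(M)+i}`, the elements of
`M` of degree at most `ρ + ∑ (d i − 1)` generate `M`. -/
theorem generated_in_degrees_le_reg
    {A : Type*} [CommRing A] [IsNoetherianRing A]
    (𝒜 : ℤ → AddSubgroup A) [GradedRing 𝒜] (hneg : ∀ n : ℤ, n < 0 → 𝒜 n = ⊥)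
    (r : ℕ) (x : Fin r → A) (d : Fin r → ℤ)
    (hx : ∀ i, x i ∈ 𝒜 (d i)) (hd : ∀ i, 1 ≤ d i)
    (hgen : Ideal.span (Set.range x) =
      Ideal.span (⋃ n ∈ Set.Ioi (0 : ℤ), (𝒜 n : Set A)))
    {M : Type*} [AddCommGroup M] [Module A M] [Module.Finite A M]
    (ℳ : ℤ → AddSubgroup M) [DirectSum.Decomposition ℳ]
    (hsmul : ∀ (i j : ℤ) (a : A) (mm : M), a ∈ 𝒜 i → mm ∈ ℳ j → a • mm ∈ ℳ (i + j))
    (ρ : ℤ) (hρ : IsRegBound x d ℳ ρ) :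
    Submodule.span A (⋃ n ∈ Set.Iic (ρ + ∑ i, (d i - 1)), (ℳ n : Set M)) = ⊤ := by
  exact main_span x 𝒜 ℳ d hneg hx hd hsmul ρ hρ
end
end

section
/- Let R be an F-finite F-pure Noetherian ring of prime characteristic p and let I = {I_n} be a filtration of ideals. If there exists a splitting φ: R^{1/p} → R of the Frobenius inclusion with φ((I_{np+1})^{1/p}) ⊆ I_{n+1} for all n ≥ 0, then for every e ≥ 1 there exists a splitting φ_e: R^{1/p^e} → R with φ_e((I_{np^e+s})^{1/p^e}) = I_{n+1} for all n ≥ 0 and all 1 ≤ s ≤ p^e. -/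
set_option maxHeartbeats 1000000
set_option synthInstance.maxHeartbeats 400000

noncomputable section

section Core
variable {R : Type*} [CommRing R]

/-- A Frobenius splitting: identifying `R^{1/p}` with `R` via `p`-th roots, an additive map
`φ : R^{1/p} → R` which is `R`-linear (`φ(a^p b^{1/p}) = a φ(b^{1/p})`) and splits the
inclusion `R ⊆ R^{1/p}` (equivalently `φ 1 = 1`). -/
def IsFrobeniusSplitting (p : ℕ) (φ : R → R) : Prop :=
  (∀ a b : R, φ (a + b) = φ a + φ b) ∧ (∀ a b : R, φ (a ^ p * b) = a * φ b) ∧ φ 1 = 1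

/-- A ring is `F`-split (`F`-pure in the `F`-finite case) if Frobenius splits. -/
def IsFSplitRing (p : ℕ) (A : Type*) [CommRing A] : Prop :=
  ∃ φ : A → A, IsFrobeniusSplitting p φ

/-- `A` is `F`-finite: `A` is a finitely generated module over its subring of `p`-th powers. -/
def IsFFiniteRing (p : ℕ) (A : Type*) [CommRing A] : Prop :=
  ∃ (n : ℕ) (g : Fin n → A), ∀ x : A, ∃ c : Fin n → A, x = ∑ i, c i ^ p * g i

/-- A filtration of ideals. -/
def IsIdealFiltration (I : ℕ → Ideal R) : Prop :=
  I 0 = ⊤ ∧ (∀ n, I (n + 1) ≤ I n) ∧ ∀ m n, I m * I n ≤ I (m + n)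

/-- An `F`-pure filtration. -/
def IsFPureFiltration (p : ℕ) (I : ℕ → Ideal R) : Prop :=
  IsIdealFiltration I ∧ ∃ φ : R → R, IsFrobeniusSplitting p φ ∧
    ∀ n : ℕ, ∀ x ∈ I (n * p + 1), φ x ∈ I (n + 1)

/-- The Frobenius power `J^{[p]}` of an ideal. -/
def Ideal.frobPow (p : ℕ) (J : Ideal R) : Ideal R :=
  Ideal.span ((fun a => a ^ p) '' (J : Set R))

/-- The `n`-th symbolic power `I^{(n)}`. -/
def Ideal.symbPow (I : Ideal R) (n : ℕ) : Ideal R where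
  carrier := {r : R | ∃ s : R, (∀ P ∈ I.minimalPrimes, s ∉ P) ∧ s * r ∈ I ^ n}
  zero_mem' :=
    ⟨1, fun P hP h1 => hP.1.1.ne_top ((Ideal.eq_top_iff_one P).mpr h1), by simp⟩
  add_mem' := by
    rintro a b ⟨s, hs, hsa⟩ ⟨t, ht, htb⟩
    refine ⟨s * t, fun P hP hst => ((hP.1.1.mem_or_mem hst).elim (hs P hP) (ht P hP)), ?_⟩
    have h1 : (s * t) * (a + b) = t * (s * a) + s * (t * b) := by ring
    rw [h1]
    exact (I ^ n).add_mem (Ideal.mul_mem_left _ _ hsa) (Ideal.mul_mem_left _ _ htb)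
  smul_mem' := by
    rintro c x ⟨s, hs, hsx⟩
    refine ⟨s, hs, ?_⟩
    have h1 : s * (c • x) = c * (s * x) := by
      simp only [smul_eq_mul]; ring
    rw [h1]
    exact Ideal.mul_mem_left _ _ hsx

end Core

/-!
Being a splitting of the `p`-th Frobenius and carrying `I_{np+1}` into `I_{n+1}` are both
stable under composition, with the exponents multiplying, so `φ^e` has both properties for
`p^e`. For any such splitting `ψ` of exponent `q`, `ψ(I_{nq+s}) ⊆ ψ(I_{nq+1}) ⊆ I_{n+1}`, and
conversely each `y ∈ I_{n+1}` is `ψ(y^q)` with `y^q ∈ I_{(n+1)q} ⊆ I_{nq+s}`.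
-/

section FrobeniusSplitting

variable {R : Type*} [CommRing R]

def IsFiltrationCompatible (p : ℕ) (I : ℕ → Ideal R) (φ : R → R) : Prop :=
  ∀ n : ℕ, ∀ x ∈ I (n * p + 1), φ x ∈ I (n + 1)

namespace IsIdealFiltration

variable {I : ℕ → Ideal R}

theorem antitone (hI : IsIdealFiltration I) : Antitone I :=
  antitone_nat_of_succ_le hI.2.1

theorem pow_le (hI : IsIdealFiltration I) (k : ℕ) : ∀ m : ℕ, I k ^ m ≤ I (k * m)
  | 0 => by simp [hI.1]
  | m + 1 => calc
      I k ^ (m + 1) = I k ^ m * I k := pow_succ _ _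
      _ ≤ I (k * m) * I k := Ideal.mul_mono_left (hI.pow_le k m)
      _ ≤ I (k * m + k) := hI.2.2 _ _
      _ = I (k * (m + 1)) := by rw [Nat.mul_succ]

theorem pow_mem (hI : IsIdealFiltration I) {k : ℕ} {x : R} (hx : x ∈ I k) (m : ℕ) :
    x ^ m ∈ I (k * m) :=
  hI.pow_le k m (Ideal.pow_mem_pow hx m)

end IsIdealFiltration

namespace IsFrobeniusSplitting

variable {p q : ℕ} {φ ψ : R → R}

theorem apply_pow (hφ : IsFrobeniusSplitting p φ) (a : R) : φ (a ^ p) = a := by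
  simpa [hφ.2.2] using hφ.2.1 a 1

theorem comp (hφ : IsFrobeniusSplitting p φ) (hψ : IsFrobeniusSplitting q ψ) :
    IsFrobeniusSplitting (p * q) (φ ∘ ψ) := by
  refine ⟨fun a b => ?_, fun a b => ?_, ?_⟩
  · simp only [Function.comp_apply, hψ.1, hφ.1]
  · simp only [Function.comp_apply, pow_mul, hψ.2.1, hφ.2.1]
  · simp only [Function.comp_apply, hψ.2.2, hφ.2.2]

theorem iterate (hφ : IsFrobeniusSplitting p φ) : ∀ e : ℕ, IsFrobeniusSplitting (p ^ e) φ^[e]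
  | 0 => ⟨fun _ _ => rfl, fun _ _ => by simp, rfl⟩
  | e + 1 => by
    rw [Function.iterate_succ, pow_succ]
    exact (hφ.iterate e).comp hφ

theorem image_filtration_eq {I : ℕ → Ideal R} (hφ : IsFrobeniusSplitting q φ)
    (hI : IsIdealFiltration I) (hcomp : IsFiltrationCompatible q I φ)
    {n s : ℕ} (hs₁ : 1 ≤ s) (hs₂ : s ≤ q) :
    φ '' (I (n * q + s) : Set R) = (I (n + 1) : Set R) := by
  apply Set.Subset.antisymm
  · rintro _ ⟨x, hx, rfl⟩
    exact hcomp n x (hI.antitone (by omega) hx)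
  · intro y hy
    have hle : n * q + s ≤ (n + 1) * q := by rw [Nat.succ_mul]; omega
    exact ⟨y ^ q, hI.antitone hle (hI.pow_mem hy q), hφ.apply_pow y⟩

end IsFrobeniusSplitting

namespace IsFiltrationCompatible

variable {p q : ℕ} {I : ℕ → Ideal R} {φ ψ : R → R}

theorem comp (hφ : IsFiltrationCompatible p I φ) (hψ : IsFiltrationCompatible q I ψ) :
    IsFiltrationCompatible (p * q) I (φ ∘ ψ) := fun n x hx =>
  hφ n (ψ x) (hψ (n * p) x (by rwa [Nat.mul_assoc]))

theorem iterate (hφ : IsFiltrationCompatible p I φ) :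
    ∀ e : ℕ, IsFiltrationCompatible (p ^ e) I φ^[e]
  | 0 => fun n x hx => by simpa using hx
  | e + 1 => by
    rw [Function.iterate_succ, pow_succ]
    exact (hφ.iterate e).comp hφ

end IsFiltrationCompatible

end FrobeniusSplitting

theorem fPureFiltration_iterate_general
    {R : Type*} [CommRing R]
    (p : ℕ)
    (I : ℕ → Ideal R) (hI : IsIdealFiltration I)
    (φ : R → R) (hφ : IsFrobeniusSplitting p φ)
    (hcomp : ∀ n : ℕ, ∀ x ∈ I (n * p + 1), φ x ∈ I (n + 1)) :
    ∀ e : ℕ, 1 ≤ e → ∃ φe : R → R, IsFrobeniusSplitting (p ^ e) φe ∧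
      ∀ n s : ℕ, 1 ≤ s → s ≤ p ^ e →
        φe '' (I (n * p ^ e + s) : Set R) = (I (n + 1) : Set R) := fun e _ =>
  ⟨φ^[e], hφ.iterate e, fun _ _ hs₁ hs₂ =>
    (hφ.iterate e).image_filtration_eq hI (IsFiltrationCompatible.iterate hcomp e) hs₁ hs₂⟩

/-- For an `F`-pure filtration on an `F`-finite `F`-pure Noetherian ring of
characteristic `p`, the single splitting `φ` with `φ((I_{np+1})^{1/p}) ⊆ I_{n+1}` yields, for
every `e ≥ 1`, a splitting `φₑ` of the `e`-th Frobenius with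
`φₑ((I_{np^e+s})^{1/p^e}) = I_{n+1}` for all `n ≥ 0` and `1 ≤ s ≤ p^e`. -/
theorem fPureFiltration_iterate
    {R : Type*} [CommRing R] [IsNoetherianRing R]
    (p : ℕ) (hp : p.Prime) [CharP R p]
    (hFF : IsFFiniteRing p R) (hFP : IsFSplitRing p R)
    (I : ℕ → Ideal R) (hI : IsIdealFiltration I)
    (φ : R → R) (hφ : IsFrobeniusSplitting p φ)
    (hcomp : ∀ n : ℕ, ∀ x ∈ I (n * p + 1), φ x ∈ I (n + 1)) :
    ∀ e : ℕ, 1 ≤ e → ∃ φe : R → R, IsFrobeniusSplitting (p ^ e) φe ∧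
      ∀ n s : ℕ, 1 ≤ s → s ≤ p ^ e →
        φe '' (I (n * p ^ e + s) : Set R) = (I (n + 1) : Set R) :=
  fPureFiltration_iterate_general p I hI φ hφ hcomp
end
end

section
/- Let R be an F-finite F-pure Noetherian ring of prime characteristic p and let I = {I_n} be an F-pure filtration. Then the Rees algebra R(I) = ⊕_{n≥0} I_n T^n is F-pure. -/
set_option maxHeartbeats 1000000
set_option synthInstance.maxHeartbeats 400000

noncomputable section

section Rees
variable {R : Type*} [CommRing R]

/-- The Rees algebra `⊕ₙ Iₙ Tⁿ ⊆ R[T]` of a filtration. -/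
def filtrationRees (I : ℕ → Ideal R) (hI : IsIdealFiltration I) : Subalgebra R (Polynomial R) where
  carrier := {f : Polynomial R | ∀ n, f.coeff n ∈ I n}
  add_mem' := by
    intro f g hf hg n
    rw [Polynomial.coeff_add]
    exact (I n).add_mem (hf n) (hg n)
  mul_mem' := by
    intro f g hf hg n
    rw [Polynomial.coeff_mul]
    refine Ideal.sum_mem _ fun x hx => ?_
    have h := hI.2.2 x.1 x.2 (Ideal.mul_mem_mul (hf x.1) (hg x.2))
    rwa [Finset.HasAntidiagonal.mem_antidiagonal.mp hx] at h
  one_mem' := by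
    intro n
    cases n with
    | zero => simp [hI.1]
    | succ n => simp [Polynomial.coeff_one]
  zero_mem' := by intro n; simp
  algebraMap_mem' := by
    intro r n
    cases n with
    | zero => simp [hI.1]
    | succ n => simp [Polynomial.coeff_C]

/-- The ideal `⊕ₙ I_{n+1} Tⁿ` of the Rees algebra; the quotient is the associated graded
algebra `gr(𝕀) = ⊕ₙ Iₙ/I_{n+1}`. -/
def grFiltIdeal (I : ℕ → Ideal R) (hI : IsIdealFiltration I) : Ideal (filtrationRees I hI) where
  carrier := {f | ∀ n, (f : Polynomial R).coeff n ∈ I (n + 1)}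
  add_mem' := by
    rintro f g hf hg n
    have h : ((f + g : filtrationRees I hI) : Polynomial R) = (f : Polynomial R) + g := rfl
    rw [h, Polynomial.coeff_add]
    exact (I (n + 1)).add_mem (hf n) (hg n)
  zero_mem' := by
    intro n
    have h : ((0 : filtrationRees I hI) : Polynomial R) = 0 := rfl
    rw [h]; simp
  smul_mem' := by
    intro c f hf n
    change ((c : Polynomial R) * (f : Polynomial R)).coeff n ∈ I (n + 1)
    rw [Polynomial.coeff_mul]
    refine Ideal.sum_mem _ fun x hx => ?_
    have h2 := hI.2.2 x.1 (x.2 + 1) (Ideal.mul_mem_mul (c.2 x.1) (hf x.2))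
    have hx' : x.1 + (x.2 + 1) = n + 1 := by
      have := Finset.HasAntidiagonal.mem_antidiagonal.mp hx; omega
    rwa [hx'] at h2

end Rees

/-!
If `φ` splits Frobenius on `R`, then `∑ aₙ Tⁿ ↦ ∑ φ(a_{np}) Tⁿ` splits Frobenius on `R[T]`:
writing `g^p = expand p (g^{(p)})`, where `g^{(p)}` has coefficients `aₙ^p`, the `p`-linearity
of `φ` passes through the coefficients of `contract p (g^p h) = g^{(p)} · contract p h`.
The `F`-purity of the filtration says exactly that this splitting maps `I_{np}` into `Iₙ`, since
`I_{np} ⊆ I_{(n-1)p+1}`, so it restricts to the Rees algebra.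
-/

open Polynomial

section Splitting

variable {p : ℕ} {A : Type*} [CommRing A] {φ : A → A}

theorem IsFrobeniusSplitting.map_zero (hφ : IsFrobeniusSplitting p φ) : φ 0 = 0 := by
  simpa using hφ.1 0 0

theorem IsFrobeniusSplitting.map_sum {ι : Type*} (hφ : IsFrobeniusSplitting p φ)
    (s : Finset ι) (f : ι → A) : φ (∑ i ∈ s, f i) = ∑ i ∈ s, φ (f i) :=
  _root_.map_sum (AddMonoidHom.mk' φ hφ.1) f s

theorem IsFrobeniusSplitting.isFSplitRing_of_mapsTo {σ : Type*} [SetLike σ A]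
    [SubringClass σ A] (hφ : IsFrobeniusSplitting p φ) (S : σ) (hS : ∀ x ∈ S, φ x ∈ S) :
    IsFSplitRing p S :=
  ⟨fun x => ⟨φ x, hS x x.2⟩, fun a b => Subtype.ext (hφ.1 a b),
    fun a b => Subtype.ext (hφ.2.1 a b), Subtype.ext hφ.2.2⟩

end Splitting

namespace Polynomial

variable {p : ℕ} {R : Type*} [CommRing R]

def mapCoeffs (φ : R → R) (f : R[X]) : R[X] :=
  f.sum fun n a => monomial n (φ a)

theorem coeff_mapCoeffs {φ : R → R} (hφ : φ 0 = 0) (f : R[X]) (n : ℕ) :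
    (f.mapCoeffs φ).coeff n = φ (f.coeff n) := by
  classical
  rw [mapCoeffs, Polynomial.sum_def, finsetSum_coeff]
  simp only [coeff_monomial, Finset.sum_ite_eq', mem_support_iff, ne_eq, ite_not]
  split_ifs with h <;> simp [h, hφ]

theorem _root_.IsFrobeniusSplitting.polynomial [ExpChar R p] {φ : R → R}
    (hφ : IsFrobeniusSplitting p φ) :
    IsFrobeniusSplitting p fun f : R[X] => (f.contract p).mapCoeffs φ := by
  have hp : p ≠ 0 := (expChar_pos R p).ne'
  have coeff_eq (f : R[X]) (n : ℕ) :
      ((f.contract p).mapCoeffs φ).coeff n = φ (f.coeff (n * p)) := by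
    rw [coeff_mapCoeffs hφ.map_zero, coeff_contract hp]
  refine ⟨fun a b => ?_, fun a b => ?_, ?_⟩
  · ext n
    simp only [coeff_add, coeff_eq, hφ.1]
  · have hpow : a ^ p * b = b * expand R p (a.map (frobenius R p)) := by
      rw [← map_expand, map_frobenius_expand, mul_comm]
    ext n
    rw [hpow, coeff_mapCoeffs hφ.map_zero, contract_mul_expand hp, mul_comm, coeff_mul,
      coeff_mul, hφ.map_sum]
    refine Finset.sum_congr rfl fun x _ => ?_
    rw [coeff_map, frobenius_def, hφ.2.1, coeff_mapCoeffs hφ.map_zero]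
  · ext n
    rw [coeff_eq, coeff_one, coeff_one]
    rcases n with _ | n
    · simpa using hφ.2.2
    · simp [hp, hφ.map_zero]

end Polynomial

section Rees

variable {R : Type*} [CommRing R] {I : ℕ → Ideal R}

theorem IsIdealFiltration.antitone_s6 (hI : IsIdealFiltration I) : Antitone I :=
  antitone_nat_of_succ_le hI.2.1

theorem mem_filtrationRees (hI : IsIdealFiltration I) {f : R[X]} :
    f ∈ filtrationRees I hI ↔ ∀ n, f.coeff n ∈ I n :=
  Iff.rfl

theorem contract_mapCoeffs_mem_filtrationRees (hI : IsIdealFiltration I) {p : ℕ} (hp : 0 < p)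
    {φ : R → R} (hφ0 : φ 0 = 0) (hφI : ∀ n : ℕ, ∀ x ∈ I (n * p + 1), φ x ∈ I (n + 1))
    {f : R[X]} (hf : f ∈ filtrationRees I hI) :
    (f.contract p).mapCoeffs φ ∈ filtrationRees I hI := by
  rw [mem_filtrationRees] at hf ⊢
  intro n
  rw [coeff_mapCoeffs hφ0, coeff_contract hp.ne']
  rcases n with _ | n
  · simp [hI.1]
  · exact hφI n _ (hI.antitone_s6 (by nlinarith) (hf _))

end Rees

theorem isFSplitRing_filtrationRees_general
    {R : Type*} [CommRing R]
    (p : ℕ) (hp : p.Prime) [CharP R p]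
    (I : ℕ → Ideal R) (hI : IsIdealFiltration I)
    (hFPfil : IsFPureFiltration p I) :
    IsFSplitRing p (filtrationRees I hI) := by
  obtain ⟨-, φ, hφ, hφI⟩ := hFPfil
  have : Fact p.Prime := ⟨hp⟩
  exact hφ.polynomial.isFSplitRing_of_mapsTo (filtrationRees I hI) fun f =>
    contract_mapCoeffs_mem_filtrationRees hI hp.pos hφ.map_zero hφI

/-- The Rees algebra of an `F`-pure filtration on an `F`-finite `F`-pure
Noetherian ring of characteristic `p` is `F`-pure. -/
theorem isFSplitRing_filtrationRees
    {R : Type*} [CommRing R] [IsNoetherianRing R]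
    (p : ℕ) (hp : p.Prime) [CharP R p]
    (hFF : IsFFiniteRing p R) (hFP : IsFSplitRing p R)
    (I : ℕ → Ideal R) (hI : IsIdealFiltration I)
    (hFPfil : IsFPureFiltration p I) :
    IsFSplitRing p (filtrationRees I hI) :=
  isFSplitRing_filtrationRees_general p hp I hI hFPfil
end
end

section
/- Let R be a polynomial ring over an F-finite field K of characteristic p (or an F-finite regular local ring) with maximal (homogeneous) ideal m, and let {I_n} be a filtration of (homogeneous) ideals. Then {I_n} is an F-pure filtration if and only if the intersection over all n ≥ 0 of the colon ideals ((I_{n+1})^{[p]} : I_{np+1}) is not contained in m^{[p]}. -/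
set_option maxHeartbeats 1000000
set_option synthInstance.maxHeartbeats 400000

noncomputable section

/-!
Since `K` is `F`-finite, `R = K[x]` is a free `R^p`-module on the monomials `θᵢ x^α` (`θᵢ` a basis
of `K` over `K^p`, `0 ≤ αₖ < p`), and all coordinate functionals are of the form `Φ(u ·)` for a
single `p⁻¹`-linear map `Φ`. Hence every `p⁻¹`-linear map is `Φ(g ·)`, and, because
`f ∈ I^{[p]}` iff all coordinates of `f` lie in `I`, it maps `J` into `I` iff `g J ⊆ I^{[p]}`.
So `{Iₙ}` is `F`-pure iff the intersection of the colon ideals contains some `g` with `Φ(g) = 1`.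
Such a `g` is not in `m^{[p]}`, as `Φ(m^{[p]}) ⊆ m`. Conversely, if the intersection (a homogeneous
ideal) contains `f ∉ m^{[p]}`, some coordinate of `f` has a nonzero constant term `c`; on the
homogeneous component of `f` of the matching degree that coordinate is the constant `c` itself,
and rescaling by `c⁻ᵖ` gives `g`.
-/

theorem Ideal.pow_mem_frobPow {R : Type*} [CommRing R] {p : ℕ} {J : Ideal R} {a : R}
    (ha : a ∈ J) : a ^ p ∈ J.frobPow p :=
  Ideal.subset_span (Set.mem_image_of_mem _ ha)

theorem Ideal.frobPow_span {R : Type*} [CommRing R] {p : ℕ} [Fact p.Prime] [CharP R p]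
    (s : Set R) : (Ideal.span s).frobPow p = Ideal.span ((· ^ p) '' s) := by
  refine le_antisymm (Ideal.span_le.mpr ?_) (Ideal.span_mono (Set.image_mono Ideal.subset_span))
  rintro _ ⟨y, hy, rfl⟩
  change y ^ p ∈ Ideal.span _
  induction hy using Submodule.span_induction with
  | mem x hx => exact Ideal.subset_span (Set.mem_image_of_mem _ hx)
  | zero => simp [zero_pow (Fact.out : p.Prime).ne_zero]
  | add x y _ _ hx hy => simpa only [add_pow_char] using Ideal.add_mem _ hx hy
  | smul r x _ hx => simpa only [smul_eq_mul, mul_pow] using Ideal.mul_mem_left _ _ hx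

section Graded

variable {ι σ A : Type*} [CommRing A] [DecidableEq ι] [SetLike σ A] [AddSubmonoidClass σ A]

theorem Ideal.isHomogeneous_frobPow_span [AddMonoid ι] {𝒜 : ι → σ} [GradedRing 𝒜] {p : ℕ}
    [Fact p.Prime] [CharP A p] {s : Set A} (hs : ∀ x ∈ s, SetLike.IsHomogeneousElem 𝒜 x) :
    ((Ideal.span s).frobPow p).IsHomogeneous 𝒜 := by
  rw [Ideal.frobPow_span]
  refine Ideal.homogeneous_span _ _ ?_
  rintro _ ⟨x, hx, rfl⟩
  exact (SetLike.homogeneousSubmonoid 𝒜).pow_mem (hs x hx) p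

theorem Ideal.IsHomogeneous.colon [AddCommMonoid ι] [PartialOrder ι] [CanonicallyOrderedAdd ι]
    [Sub ι] [OrderedSub ι] [AddLeftReflectLE ι] {𝒜 : ι → σ} [GradedRing 𝒜] {I J : Ideal A}
    (hI : I.IsHomogeneous 𝒜) (hJ : J.IsHomogeneous 𝒜) : (I.colon J).IsHomogeneous 𝒜 := by
  classical
  intro k f hf
  rw [Submodule.mem_colon] at hf ⊢
  intro x hx
  rw [← DirectSum.sum_support_decompose 𝒜 x, Finset.smul_sum]
  refine Ideal.sum_mem _ fun j _ => ?_
  have hprod := DirectSum.coe_decompose_mul_of_right_mem_of_le 𝒜 (a := f)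
    (SetLike.coe_mem (DirectSum.decompose 𝒜 x j)) (le_add_self : j ≤ k + j)
  rw [add_tsub_cancel_right] at hprod
  rw [smul_eq_mul, ← hprod]
  exact hI _ (hf _ (hJ j hx))

end Graded

/-- `S` is spanned over `S^p` by `basis`, with `p⁻¹`-linear coordinates `coord`, and every
coordinate is `trace (dual i * ·)`, so `trace` generates `Hom_{S^p}(S, S)` as an `S`-module. -/
structure FrobeniusCoordinates (p : ℕ) (S ι : Type*) [CommRing S] [Fintype ι] where
  basis : ι → S
  coord : ι → S →+ S
  coord_pow_mul (i : ι) (g f : S) : coord i (g ^ p * f) = g * coord i f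
  sum_coord_pow_mul_basis (f : S) : ∑ i, coord i f ^ p * basis i = f
  trace : S →+ S
  trace_pow_mul (g f : S) : trace (g ^ p * f) = g * trace f
  dual : ι → S
  coord_eq_trace_mul (i : ι) (f : S) : coord i f = trace (dual i * f)

namespace FrobeniusCoordinates

variable {p : ℕ} {S ι : Type*} [CommRing S] [Fintype ι] (F : FrobeniusCoordinates p S ι)

theorem mem_frobPow_iff {J : Ideal S} {f : S} : f ∈ J.frobPow p ↔ ∀ i, F.coord i f ∈ J := by
  refine ⟨fun hf => ?_, fun h => ?_⟩
  · induction hf using Submodule.span_induction with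
    | mem x hx =>
      obtain ⟨y, hy, rfl⟩ := hx
      intro i
      dsimp only
      rw [← mul_one (y ^ p), F.coord_pow_mul]
      exact J.mul_mem_right _ hy
    | zero => simp
    | add x y _ _ hx hy => simpa using fun i => J.add_mem (hx i) (hy i)
    | smul r x _ hx =>
      intro i
      rw [smul_eq_mul, ← F.sum_coord_pow_mul_basis x, Finset.mul_sum, map_sum]
      refine J.sum_mem fun j _ => ?_
      rw [mul_left_comm, F.coord_pow_mul]
      exact J.mul_mem_right _ (hx j)
  · rw [← F.sum_coord_pow_mul_basis f]
    exact Ideal.sum_mem _ fun i _ => Ideal.mul_mem_right _ _ (Ideal.pow_mem_frobPow (h i))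

theorem trace_mem_of_mem_frobPow {J : Ideal S} {f : S} (hf : f ∈ J.frobPow p) :
    F.trace f ∈ J := by
  rw [← F.sum_coord_pow_mul_basis f, map_sum]
  exact J.sum_mem fun i _ => by
    rw [F.trace_pow_mul]
    exact J.mul_mem_right _ (F.mem_frobPow_iff.mp hf i)

theorem exists_eq_trace_mul {φ : S → S} (hadd : ∀ a b, φ (a + b) = φ a + φ b)
    (hpow : ∀ a b, φ (a ^ p * b) = a * φ b) : ∃ g, ∀ x, φ x = F.trace (g * x) := by
  refine ⟨∑ i, φ (F.basis i) ^ p * F.dual i, fun x => ?_⟩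
  let φ' : S →+ S := AddMonoidHom.mk' φ hadd
  calc φ x = φ' (∑ i, F.coord i x ^ p * F.basis i) := by rw [F.sum_coord_pow_mul_basis]; rfl
    _ = ∑ i, φ (F.basis i) * F.trace (F.dual i * x) := by
      rw [map_sum]
      refine Finset.sum_congr rfl fun i _ => ?_
      rw [AddMonoidHom.mk'_apply, hpow, F.coord_eq_trace_mul, mul_comm]
    _ = F.trace ((∑ i, φ (F.basis i) ^ p * F.dual i) * x) := by
      rw [Finset.sum_mul, map_sum]
      simp only [mul_assoc, F.trace_pow_mul]

theorem exists_mem_trace_eq_one {J : Ideal S} {f : S} (hf : f ∈ J) {i : ι}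
    (hi : IsUnit (F.coord i f)) : ∃ g ∈ J, F.trace g = 1 := by
  obtain ⟨u, hu⟩ := hi
  refine ⟨(↑u⁻¹ : S) ^ p * (F.dual i * f), J.mul_mem_left _ (J.mul_mem_left _ hf), ?_⟩
  rw [F.trace_pow_mul, ← F.coord_eq_trace_mul, ← hu, Units.inv_mul]

theorem isFPureFiltration_iff {I : ℕ → Ideal S} :
    IsFPureFiltration p I ↔ IsIdealFiltration I ∧
      ∃ g ∈ ⨅ n : ℕ, ((I (n + 1)).frobPow p).colon (I (n * p + 1)), F.trace g = 1 := by
  refine and_congr_right fun _ => ⟨?_, ?_⟩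
  · rintro ⟨φ, ⟨hadd, hpow, hone⟩, hφ⟩
    obtain ⟨g, hg⟩ := F.exists_eq_trace_mul hadd hpow
    refine ⟨g, Ideal.mem_iInf.mpr fun n => Submodule.mem_colon.mpr fun x hx => ?_, ?_⟩
    · refine F.mem_frobPow_iff.mpr fun i => ?_
      rw [F.coord_eq_trace_mul, smul_eq_mul, mul_left_comm, ← hg]
      exact hφ n _ ((I _).mul_mem_left _ hx)
    · rw [← mul_one g, ← hg, hone]
  · rintro ⟨g, hg, hg1⟩
    refine ⟨fun x => F.trace (g * x), ⟨fun a b => ?_, fun a b => ?_, ?_⟩, fun n x hx => ?_⟩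
    · dsimp only
      rw [mul_add, map_add]
    · dsimp only
      rw [mul_left_comm, F.trace_pow_mul]
    · dsimp only
      rw [mul_one, hg1]
    · exact F.trace_mem_of_mem_frobPow
        (Submodule.mem_colon.mp (Ideal.mem_iInf.mp hg n) x hx)

end FrobeniusCoordinates

/-- `K` as an algebra over itself through the Frobenius, `a • x = a ^ p * x`; a basis of it over
`K` is a basis of `K` over `K ^ p`. -/
def FrobeniusTwist (_p : ℕ) (K : Type*) : Type _ := K

namespace FrobeniusTwist

variable (p : ℕ) (K : Type*) [Field K] [Fact p.Prime] [CharP K p]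

instance : Field (FrobeniusTwist p K) := inferInstanceAs (Field K)

instance : Algebra K (FrobeniusTwist p K) :=
  RingHom.toAlgebra (S := FrobeniusTwist p K) (frobenius K p)

theorem finite_of_isFFiniteRing (hFF : IsFFiniteRing p K) :
    Module.Finite K (FrobeniusTwist p K) := by
  obtain ⟨n, g, hg⟩ := hFF
  refine Module.Finite.of_surjective (Fintype.linearCombination K (M := FrobeniusTwist p K) g)
    fun x => ?_
  obtain ⟨c, hc⟩ := hg x
  exact ⟨c, hc.symm⟩

end FrobeniusTwist

theorem FrobeniusCoordinates.exists_of_isFFiniteRing {p : ℕ} [Fact p.Prime] {K : Type*} [Field K]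
    [CharP K p] (hFF : IsFFiniteRing p K) : ∃ n, Nonempty (FrobeniusCoordinates p K (Fin n)) := by
  let V := FrobeniusTwist p K
  have := FrobeniusTwist.finite_of_isFFiniteRing p K hFF
  let b := Module.finBasis K V
  let lam := b.coord ⟨0, Module.finrank_pos⟩
  let B : LinearMap.BilinForm K V := (LinearMap.mul K V).compr₂ lam
  have hB : B.Nondegenerate := .ofSeparatingLeft fun u hu => by
    by_contra hu0
    simpa [B, lam, mul_inv_cancel_left₀ hu0] using hu (u⁻¹ * b ⟨0, Module.finrank_pos⟩)
  exact ⟨_, ⟨{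
    basis := fun i => b i
    coord := fun i => (b.coord i).toAddMonoidHom
    coord_pow_mul := fun i g f => (b.coord i).map_smul g f
    sum_coord_pow_mul_basis := b.sum_repr
    trace := lam.toAddMonoidHom
    trace_pow_mul := lam.map_smul
    dual := fun i => (B.toDual hB).symm (b.coord i)
    coord_eq_trace_mul := fun i f =>
      (LinearMap.BilinForm.apply_toDual_symm_apply (hB := hB) (b.coord i) f).symm }⟩⟩


namespace MvPolynomial

variable {σ : Type*} [Fintype σ] {p : ℕ}

def residueExp (α : σ → Fin p) : σ →₀ ℕ := Finsupp.equivFunOnFinite.symm fun k => α k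

@[simp] theorem residueExp_apply (α : σ → Fin p) (k : σ) : residueExp α k = α k := rfl

theorem smul_add_residueExp_inj [NeZero p] {γ γ' : σ →₀ ℕ} {α α' : σ → Fin p}
    (h : p • γ + residueExp α = p • γ' + residueExp α') : γ = γ' ∧ α = α' := by
  have hk (k : σ) : p * γ k + α k = p * γ' k + α' k := by
    simpa using DFunLike.congr_fun h k
  have hmod (k : σ) := congrArg (· % p) (hk k)
  have hdiv (k : σ) := congrArg (· / p) (hk k)
  have hp : 0 < p := NeZero.pos p
  constructor
  · ext k
    simpa [Nat.mul_add_div hp, Nat.div_eq_of_lt] using hdiv k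
  · ext k
    simpa [Nat.mul_add_mod, Nat.mod_eq_of_lt] using hmod k

theorem smul_add_residueExp_injective [NeZero p] (α : σ → Fin p) :
    Function.Injective fun γ : σ →₀ ℕ => p • γ + residueExp α :=
  fun _ _ h => (smul_add_residueExp_inj h).1

variable {K : Type*} [CommRing K]

def polyCoord [NeZero p] (c : K →+ K) (α : σ → Fin p) :
    MvPolynomial σ K →+ MvPolynomial σ K where
  toFun f := AddMonoidAlgebra.ofCoeff <| Finsupp.mapRange c c.map_zero <|
    Finsupp.comapDomain _ (AddMonoidAlgebra.coeff f) (smul_add_residueExp_injective α).injOn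
  map_zero' := by ext; simp [coeff]
  map_add' f g := by ext; simp [coeff]

theorem coeff_polyCoord [NeZero p] (c : K →+ K) (α : σ → Fin p) (f : MvPolynomial σ K)
    (γ : σ →₀ ℕ) : coeff γ (polyCoord c α f) = c (coeff (p • γ + residueExp α) f) := rfl

theorem exists_eq_smul_add_residueExp [NeZero p] (β : σ →₀ ℕ) :
    ∃ γ α, β = p • γ + residueExp (p := p) α :=
  ⟨Finsupp.equivFunOnFinite.symm fun k => β k / p, fun k => ⟨β k % p, Nat.mod_lt _ (NeZero.pos p)⟩,
    by ext k; simp [Nat.div_add_mod]⟩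

theorem smul_le_smul_add_residueExp_iff {δ γ : σ →₀ ℕ} (α : σ → Fin p) :
    p • δ ≤ p • γ + residueExp α ↔ δ ≤ γ := by
  simp only [Finsupp.le_def, Finsupp.add_apply, Finsupp.smul_apply, smul_eq_mul, residueExp_apply]
  refine forall_congr' fun k => ⟨fun h => ?_, fun h => ?_⟩
  · by_contra hlt
    have hp : p * (γ k + 1) ≤ p * δ k := Nat.mul_le_mul_left p (not_le.mp hlt)
    have := (α k).isLt
    rw [mul_add, mul_one] at hp
    omega
  · have := Nat.mul_le_mul_left p h
    omega

theorem polyCoord_pow_mul [Fact p.Prime] [CharP K p] {c : K →+ K}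
    (hc : ∀ a b, c (a ^ p * b) = a * c b) (α : σ → Fin p) (g f : MvPolynomial σ K) :
    polyCoord c α (g ^ p * f) = g * polyCoord c α f := by
  induction g using MvPolynomial.induction_on' with
  | add g₁ g₂ h₁ h₂ => rw [add_pow_char, add_mul, map_add, h₁, h₂, add_mul]
  | monomial δ b =>
    ext γ
    rw [monomial_pow, coeff_polyCoord]
    by_cases hδ : δ ≤ γ
    · obtain ⟨γ', rfl⟩ := exists_add_of_le hδ
      rw [smul_add, add_assoc, coeff_monomial_mul, hc, coeff_monomial_mul, coeff_polyCoord]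
    · rw [coeff_monomial_mul', if_neg ((smul_le_smul_add_residueExp_iff α).not.mpr hδ),
        coeff_monomial_mul', if_neg hδ, map_zero]

theorem polyCoord_monomial_residueExp [NeZero p] [DecidableEq σ] (c : K →+ K) (α α' : σ → Fin p)
    (a : K) :
    polyCoord c α (monomial (residueExp α') a) = if α' = α then C (c a) else 0 := by
  ext γ
  have key : residueExp α' = p • γ + residueExp α ↔ γ = 0 ∧ α' = α := by
    refine ⟨fun h => ?_, by rintro ⟨rfl, rfl⟩; simp⟩
    obtain ⟨h₁, h₂⟩ :=
      smul_add_residueExp_inj (h.symm.trans (by simp : _ = p • 0 + residueExp α'))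
    exact ⟨h₁, h₂.symm⟩
  simp only [coeff_polyCoord, coeff_monomial, key, apply_ite c, map_zero, apply_ite (coeff γ),
    coeff_C, coeff_zero]
  by_cases hγ : γ = 0
  · simp [hγ]
  · simp [hγ, Ne.symm hγ]

theorem polyCoord_monomial_mul [NeZero p] (c : K →+ K) (α : σ → Fin p) (u : K)
    (f : MvPolynomial σ K) :
    polyCoord c (fun _ => Fin.rev (0 : Fin p)) (monomial (residueExp (Fin.rev ∘ α)) u * f) =
      polyCoord (c.comp (AddMonoidHom.mulLeft u)) α f := by
  ext γ
  have hexp : p • γ + residueExp (fun _ => Fin.rev (0 : Fin p)) =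
      residueExp (Fin.rev ∘ α) + (p • γ + residueExp α) := by
    ext k
    have := (α k).isLt
    simp only [Finsupp.add_apply, Finsupp.smul_apply, residueExp_apply, Function.comp_apply,
      Fin.val_rev, Fin.val_zero]
    omega
  rw [coeff_polyCoord, hexp, coeff_monomial_mul, coeff_polyCoord]
  rfl

theorem polyCoord_homogeneousComponent [NeZero p] (c : K →+ K) (α : σ → Fin p)
    (f : MvPolynomial σ K) :
    polyCoord c α (homogeneousComponent (residueExp α).degree f) =
      C (c (coeff (residueExp α) f)) := by
  classical
  ext γ
  have hdeg : (p • γ + residueExp α).degree = (residueExp α).degree ↔ γ = 0 := by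
    simp [NeZero.ne p, Finsupp.degree_eq_zero_iff]
  simp only [coeff_polyCoord, coeff_homogeneousComponent, hdeg]
  by_cases hγ : γ = 0
  · simp [hγ]
  · rw [if_neg hγ, map_zero, coeff_C, if_neg (Ne.symm hγ)]

end MvPolynomial

theorem MvPolynomial.isHomogeneousElem_iff {σ R : Type*} [CommSemiring R]
    {f : MvPolynomial σ R} :
    SetLike.IsHomogeneousElem (homogeneousSubmodule σ R) f ↔ ∃ k, f.IsHomogeneous k :=
  Iff.rfl

theorem MvPolynomial.mem_span_range_X_iff {σ R : Type*} [CommRing R] {f : MvPolynomial σ R} :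
    f ∈ Ideal.span (Set.range X) ↔ coeff 0 f = 0 := by
  simpa [Finsupp.degree_eq_zero_iff] using mem_pow_idealOfVars_iff' 1 f

attribute [local instance] MvPolynomial.gradedAlgebra

namespace FrobeniusCoordinates

open MvPolynomial

variable {p : ℕ} [Fact p.Prime] {K : Type*} [CommRing K] [CharP K p] {ι : Type*} [Fintype ι]
  {σ : Type*} [Fintype σ] [DecidableEq σ]

theorem sum_polyCoord_pow_mul_monomial (F : FrobeniusCoordinates p K ι) (f : MvPolynomial σ K) :
    ∑ b : ι × (σ → Fin p),
      polyCoord (F.coord b.1) b.2 f ^ p * monomial (residueExp b.2) (F.basis b.1) = f := by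
  induction f using MvPolynomial.induction_on' with
  | add f g hf hg =>
    simp only [map_add, add_pow_char, add_mul, Finset.sum_add_distrib, hf, hg]
  | monomial β a =>
    obtain ⟨γ, α, rfl⟩ := exists_eq_smul_add_residueExp (p := p) β
    have hsplit :
        monomial (p • γ + residueExp α) a = monomial γ 1 ^ p * monomial (residueExp α) a := by
      rw [monomial_pow, monomial_mul, one_pow, one_mul]
    have hinner (i : ι) : ∑ α' : σ → Fin p,
        polyCoord (F.coord i) α' (monomial γ 1 ^ p * monomial (residueExp α) a) ^ p *
          monomial (residueExp α') (F.basis i) =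
        monomial γ 1 ^ p * monomial (residueExp α) (F.coord i a ^ p * F.basis i) := by
      rw [Finset.sum_eq_single α]
      · rw [polyCoord_pow_mul (F.coord_pow_mul i), polyCoord_monomial_residueExp, if_pos rfl,
          mul_pow, mul_assoc, ← C_pow, C_mul_monomial]
      · intro α' _ hα'
        rw [polyCoord_pow_mul (F.coord_pow_mul i), polyCoord_monomial_residueExp, if_neg hα'.symm,
          mul_zero, zero_pow (Fact.out : p.Prime).ne_zero, zero_mul]
      · simp
    rw [Fintype.sum_prod_type, hsplit, Finset.sum_congr rfl fun i _ => hinner i, ← Finset.mul_sum,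
      ← map_sum, F.sum_coord_pow_mul_basis]

/-- The trace reads the coefficients at exponents `≡ (p - 1, …, p - 1) mod p`; multiplying by
`x ^ ((p - 1) - α)` moves the exponents `≡ α` there. -/
def mvPolynomial (F : FrobeniusCoordinates p K ι) :
    FrobeniusCoordinates p (MvPolynomial σ K) (ι × (σ → Fin p)) where
  basis b := monomial (residueExp b.2) (F.basis b.1)
  coord b := polyCoord (F.coord b.1) b.2
  coord_pow_mul b := polyCoord_pow_mul (F.coord_pow_mul b.1) b.2
  sum_coord_pow_mul_basis := F.sum_polyCoord_pow_mul_monomial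
  trace := polyCoord F.trace fun _ => Fin.rev 0
  trace_pow_mul := polyCoord_pow_mul F.trace_pow_mul _
  dual b := monomial (residueExp (Fin.rev ∘ b.2)) (F.dual b.1)
  coord_eq_trace_mul b f := by
    have hcoord : F.coord b.1 = F.trace.comp (AddMonoidHom.mulLeft (F.dual b.1)) :=
      AddMonoidHom.ext (F.coord_eq_trace_mul b.1)
    rw [polyCoord_monomial_mul, hcoord]

theorem exists_mem_trace_eq_one_iff {K : Type*} [Field K] [CharP K p]
    (F : FrobeniusCoordinates p K ι) {J : Ideal (MvPolynomial σ K)}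
    (hJ : J.IsHomogeneous (homogeneousSubmodule σ K)) :
    (∃ g ∈ J, F.mvPolynomial.trace g = 1) ↔ ¬ J ≤ (Ideal.span (Set.range X)).frobPow p := by
  refine ⟨fun ⟨g, hg, hg1⟩ hle => ?_, fun hJm => ?_⟩
  · have := F.mvPolynomial.trace_mem_of_mem_frobPow (hle hg)
    rw [hg1, mem_span_range_X_iff, coeff_zero_one] at this
    exact one_ne_zero this
  · obtain ⟨f, hfJ, hf⟩ := SetLike.not_le_iff_exists.mp hJm
    obtain ⟨⟨i, α⟩, hi⟩ : ∃ b, F.mvPolynomial.coord b f ∉ Ideal.span (Set.range X) := by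
      simpa [F.mvPolynomial.mem_frobPow_iff] using hf
    have hc : F.coord i (coeff (residueExp α) f) ≠ 0 := by
      simpa [mem_span_range_X_iff, mvPolynomial, coeff_polyCoord] using hi
    refine F.mvPolynomial.exists_mem_trace_eq_one (i := (i, α))
      (homogeneousComponent_mem_of_mem hJ hfJ (residueExp α).degree) ?_
    change IsUnit (polyCoord (F.coord i) α _)
    rw [polyCoord_homogeneousComponent]
    exact hc.isUnit.map C

end FrobeniusCoordinates

/-- **Fedder-type criterion for filtrations.** Over a polynomial ring `R` over an
`F`-finite field of characteristic `p`, with `m` the maximal homogeneous ideal, a filtration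
`{Iₙ}` of homogeneous ideals is an `F`-pure filtration if and only if
`⋂ₙ ((I_{n+1})^{[p]} : I_{np+1}) ⊄ m^{[p]}`. -/
theorem fedder_criterion_filtration
    (K : Type*) [Field K] (p d : ℕ) (hp : p.Prime) [CharP K p]
    (hFF : IsFFiniteRing p K)
    (I : ℕ → Ideal (MvPolynomial (Fin d) K)) (hI : IsIdealFiltration I)
    (hhom : ∀ n, ∃ S : Set (MvPolynomial (Fin d) K),
      (∀ f ∈ S, ∃ k, f.IsHomogeneous k) ∧ I n = Ideal.span S) :
    IsFPureFiltration p I ↔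
      ¬ ((⨅ n : ℕ, ((I (n + 1)).frobPow p).colon (I (n * p + 1))) ≤
          (Ideal.span (Set.range MvPolynomial.X)).frobPow p) := by
  have : Fact p.Prime := ⟨hp⟩
  obtain ⟨_, ⟨F⟩⟩ := FrobeniusCoordinates.exists_of_isFFiniteRing hFF
  simp_rw [← MvPolynomial.isHomogeneousElem_iff] at hhom
  have hJ : (⨅ n : ℕ, ((I (n + 1)).frobPow p).colon (I (n * p + 1))).IsHomogeneous
      (MvPolynomial.homogeneousSubmodule (Fin d) K) := by
    refine Ideal.IsHomogeneous.iInf fun n => ?_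
    obtain ⟨S, hS, hIS⟩ := hhom (n + 1)
    obtain ⟨T, hT, hIT⟩ := hhom (n * p + 1)
    rw [hIS, hIT]
    exact (Ideal.isHomogeneous_frobPow_span hS).colon (Ideal.homogeneous_span _ T hT)
  rw [F.mvPolynomial.isFPureFiltration_iff, F.exists_mem_trace_eq_one_iff hJ, and_iff_right hI]
end
end

section
/- Let R = K[x_1,...,x_r] be a polynomial ring over an F-finite field of characteristic p, and let I be a square-free monomial ideal. Then I is symbolic F-pure: there is a Frobenius splitting φ with φ((I^{(np+1)})^{1/p}) ⊆ I^{(n+1)} for all n ≥ 0. -/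
set_option maxHeartbeats 1000000
set_option synthInstance.maxHeartbeats 400000

noncomputable section

/-!
The splitting is `φ(c x^d) = θ(c) x^(d/p)` when `p ∣ d` and `0` otherwise, where `θ` is a
splitting of `K` (a `K^p`-linear form with `θ 1 = 1`, followed by the `p`-th root). If
`s x ∈ I^{np+1}` with `s` outside the minimal primes, then `s φ(x) = φ(s^p x)` and
`s^p x ∈ I^{np+1}`, so it suffices to show `φ(I^{np+1}) ⊆ I^{(n+1)}`, one monomial at a time.

A minimal prime of `I` is `P = (x_i : i ∈ A)`, and every monomial of `I^{np+1}` has degree at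
least `np+1` in the variables of `A`; hence `x^(d/p)` has degree at least `n+1` in them. By
minimality, each `i ∈ A` is the only variable of `A` in some square-free generator, so `n+1` such
generators divide `t x^(d/p)` for a monomial `t ∉ P`. Prime avoidance over the finitely many
minimal primes turns these local witnesses into one `s` with `s x^(d/p) ∈ I^{n+1}`.
-/

open MvPolynomial Finsupp

namespace Ideal

variable {R : Type*} [CommRing R] {I : Ideal R} {n : ℕ}

theorem pow_le_symbPow : I ^ n ≤ I.symbPow n :=
  fun _ hx => ⟨1, fun P hP h => hP.1.1.ne_top ((eq_top_iff_one P).mpr h), by rwa [one_mul]⟩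

theorem symbPow_zero : I.symbPow 0 = ⊤ :=
  top_le_iff.mp (by simpa using (pow_le_symbPow : I ^ 0 ≤ I.symbPow 0))

theorem symbPow_succ_le : I.symbPow (n + 1) ≤ I.symbPow n :=
  fun _ ⟨s, hs, hsx⟩ => ⟨s, hs, pow_le_pow_right n.le_succ hsx⟩

theorem symbPow_mul_le (m n : ℕ) : I.symbPow m * I.symbPow n ≤ I.symbPow (m + n) := by
  refine mul_le.mpr fun a ⟨s, hs, hsa⟩ b ⟨t, ht, htb⟩ => ⟨s * t, ?_, ?_⟩
  · exact fun P hP hst => (hP.1.1.mem_or_mem hst).elim (hs P hP) (ht P hP)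
  · rw [mul_mul_mul_comm, pow_add]
    exact mul_mem_mul hsa htb

theorem isIdealFiltration_symbPow : IsIdealFiltration I.symbPow :=
  ⟨symbPow_zero, fun _ => symbPow_succ_le, symbPow_mul_le⟩

theorem mem_symbPow_of_mul_mem {s x : R} (hs : ∀ P ∈ I.minimalPrimes, s ∉ P)
    (h : s * x ∈ I.symbPow n) : x ∈ I.symbPow n := by
  obtain ⟨t, ht, htsx⟩ := h
  exact ⟨t * s, fun P hP hts => (hP.1.1.mem_or_mem hts).elim (ht P hP) (hs P hP),
    by rwa [mul_assoc]⟩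

theorem mem_symbPow_of_forall_minimalPrimes [IsNoetherianRing R] {x : R}
    (h : ∀ P ∈ I.minimalPrimes, ∃ t ∉ P, t * x ∈ I ^ n) : x ∈ I.symbPow n := by
  have hcolon : ¬ ((I ^ n).colon (span {x}) : Set R) ⊆ ⋃ P ∈ I.minimalPrimes, P := by
    rw [subset_union_prime_finite I.finite_minimalPrimes_of_isNoetherianRing ⊥ ⊥
      fun P hP _ _ => hP.1.1]
    rintro ⟨P, hP, hle⟩
    obtain ⟨t, htP, ht⟩ := h P hP
    exact htP (hle (mem_colon_span_singleton.mpr ht))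
  obtain ⟨s, hs, hsP⟩ := Set.not_subset.mp hcolon
  exact ⟨s, fun P hP hsP' => hsP (Set.mem_biUnion hP hsP'), mem_colon_span_singleton.mp hs⟩

theorem isFPureFiltration_symbPow {p : ℕ} (hp : p ≠ 0) {φ : R → R}
    (hφ : IsFrobeniusSplitting p φ) (h : ∀ n, ∀ x ∈ I ^ (n * p + 1), φ x ∈ I.symbPow (n + 1)) :
    IsFPureFiltration p I.symbPow := by
  refine ⟨isIdealFiltration_symbPow, φ, hφ, fun n x ⟨s, hs, hsx⟩ => ?_⟩
  have hspx : s ^ p * x ∈ I ^ (n * p + 1) := by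
    obtain ⟨q, rfl⟩ := Nat.exists_eq_add_one_of_ne_zero hp
    rw [pow_succ s, mul_assoc]
    exact mul_mem_left _ _ hsx
  exact mem_symbPow_of_mul_mem hs (hφ.2.1 s x ▸ h n _ hspx)

end Ideal

theorem exists_isFrobeniusSplitting (K : Type*) [Field K] (p : ℕ) [Fact p.Prime] [CharP K p] :
    ∃ θ : K →+ K, IsFrobeniusSplitting p θ := by
  let e := (frobenius K p).rangeRestrictFieldEquiv
  obtain ⟨ℓ, hℓ⟩ := Module.Projective.exists_dual_eq_one (frobenius K p).fieldRange
    (one_ne_zero : (1 : K) ≠ 0)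
  refine ⟨e.symm.toAddMonoidHom.comp ℓ.toAddMonoidHom, map_add _, fun a b => ?_, by simp [hℓ]⟩
  have hsmul : a ^ p * b = e a • b := by simp [e, Subfield.smul_def, frobenius_def]
  simp [hsmul, map_smul, smul_eq_mul]

namespace MvPolynomial

variable {σ R : Type*} [CommRing R]

section FrobeniusSplitting

open Classical in
def frobeniusSplitting (p : ℕ) (θ : R →+ R) : MvPolynomial σ R →+ MvPolynomial σ R :=
  (Finsupp.liftAddHom fun d : σ →₀ ℕ => if ∀ i, p ∣ d i then
    (monomial (d.mapRange (· / p) (Nat.zero_div p))).toAddMonoidHom.comp θ else 0).comp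
    AddMonoidAlgebra.coeffAddEquiv.toAddMonoidHom

variable {p : ℕ} (θ : R →+ R)

theorem frobeniusSplitting_monomial_nsmul (hp : p ≠ 0) (z : σ →₀ ℕ) (c : R) :
    frobeniusSplitting p θ (monomial (p • z) c) = monomial z (θ c) := by
  classical
  change Finsupp.liftAddHom _ (Finsupp.single (p • z) c) = _
  rw [liftAddHom_apply_single, if_pos fun i => by simp]
  have hz : (p • z).mapRange (· / p) (Nat.zero_div p) = z := by
    ext i
    simp [Nat.mul_div_cancel_left _ (Nat.pos_of_ne_zero hp)]
  simp [hz]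

theorem frobeniusSplitting_monomial_of_not_dvd {d : σ →₀ ℕ} (hd : ¬ ∀ i, p ∣ d i) (c : R) :
    frobeniusSplitting p θ (monomial d c) = 0 := by
  classical
  change Finsupp.liftAddHom _ (Finsupp.single d c) = _
  rw [liftAddHom_apply_single, if_neg hd]
  rfl

theorem exists_eq_nsmul_of_forall_dvd {d : σ →₀ ℕ} (hd : ∀ i, p ∣ d i) : ∃ z, d = p • z :=
  ⟨d.mapRange (· / p) (Nat.zero_div p), by ext i; simp [Nat.mul_div_cancel' (hd i)]⟩

theorem frobeniusSplitting_pow_mul [Fact p.Prime] [CharP R p]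
    (hθ : ∀ a b, θ (a ^ p * b) = a * θ b) (f g : MvPolynomial σ R) :
    frobeniusSplitting p θ (f ^ p * g) = f * frobeniusSplitting p θ g := by
  have hp := (Fact.out : p.Prime).ne_zero
  induction g using MvPolynomial.induction_on' with
  | add g₁ g₂ ih₁ ih₂ => rw [mul_add, map_add, map_add, ih₁, ih₂, mul_add]
  | monomial d c =>
    induction f using MvPolynomial.induction_on' with
    | add f₁ f₂ ih₁ ih₂ => rw [add_pow_char, add_mul, map_add, ih₁, ih₂, add_mul]
    | monomial u a =>
      rw [monomial_pow, monomial_mul]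
      by_cases hd : ∀ i, p ∣ d i
      · obtain ⟨z, rfl⟩ := exists_eq_nsmul_of_forall_dvd hd
        rw [← smul_add, frobeniusSplitting_monomial_nsmul θ hp,
          frobeniusSplitting_monomial_nsmul θ hp, hθ, monomial_mul]
      · have hud : ¬ ∀ i, p ∣ (p • u + d) i := fun h => hd fun i =>
          (Nat.dvd_add_right (dvd_mul_right p (u i))).mp (by simpa using h i)
        rw [frobeniusSplitting_monomial_of_not_dvd θ hud,
          frobeniusSplitting_monomial_of_not_dvd θ hd, mul_zero]

theorem _root_.IsFrobeniusSplitting.mvPolynomial [Fact p.Prime] [CharP R p]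
    (hθ : IsFrobeniusSplitting p θ) :
    IsFrobeniusSplitting p (frobeniusSplitting p θ : MvPolynomial σ R → MvPolynomial σ R) := by
  refine ⟨map_add _, frobeniusSplitting_pow_mul θ hθ.2.1, ?_⟩
  rw [← C_1, C_apply, ← nsmul_zero p,
    frobeniusSplitting_monomial_nsmul θ (Fact.out : p.Prime).ne_zero, hθ.2.2, nsmul_zero,
    ← C_apply, C_1]

end FrobeniusSplitting

abbrev monomialIdeal (R : Type*) [CommRing R] (S : Set (σ →₀ ℕ)) : Ideal (MvPolynomial σ R) :=
  Ideal.span ((fun v => monomial v 1) '' S)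

variable {S : Set (σ →₀ ℕ)}

theorem monomial_mem_span_X_image {A : Set σ} {v : σ →₀ ℕ} {i : σ} (hi : i ∈ A) (hv : v i ≠ 0)
    (c : R) : monomial v c ∈ Ideal.span (X '' A) :=
  mem_ideal_span_X_image.mpr fun m hm => ⟨i, hi, by rwa [Finset.mem_singleton.mp
    (support_monomial_subset hm)]⟩

theorem X_mem_span_X_image_iff [Nontrivial R] {A : Set σ} {i : σ} :
    (X i : MvPolynomial σ R) ∈ Ideal.span (X '' A) ↔ i ∈ A := by
  simp [mem_ideal_span_X_image, support_X, Finsupp.single_apply_eq_zero]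

theorem ker_aeval_indicator_compl (A : Set σ) :
    RingHom.ker (aeval (Aᶜ.indicator X) : MvPolynomial σ R →ₐ[R] MvPolynomial σ R) =
      Ideal.span (X '' A) := by
  refine le_antisymm (fun f hf => ?_) (Ideal.span_le.mpr ?_)
  · have hcomp : (Ideal.Quotient.mkₐ R (Ideal.span (X '' A))).comp (aeval (Aᶜ.indicator X)) =
        Ideal.Quotient.mkₐ R _ := by
      refine algHom_ext fun i => ?_
      by_cases hi : i ∈ A
      · simpa [hi] using (Ideal.Quotient.eq_zero_iff_mem.mpr
          (Ideal.subset_span (Set.mem_image_of_mem X hi))).symm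
      · simp [hi]
    have := AlgHom.congr_fun hcomp f
    rw [AlgHom.comp_apply, RingHom.mem_ker.mp hf, map_zero, Ideal.Quotient.mkₐ_eq_mk] at this
    exact Ideal.Quotient.eq_zero_iff_mem.mp this.symm
  · rintro _ ⟨i, hi, rfl⟩
    simp [hi]

theorem isPrime_span_X_image [IsDomain R] (A : Set σ) :
    (Ideal.span (X '' A : Set (MvPolynomial σ R))).IsPrime :=
  ker_aeval_indicator_compl (R := R) A ▸ RingHom.ker_isPrime _

theorem exists_X_mem_of_monomial_mem {P : Ideal (MvPolynomial σ R)} [hP : P.IsPrime]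
    {v : σ →₀ ℕ} (h : monomial v 1 ∈ P) : ∃ i, v i ≠ 0 ∧ X i ∈ P := by
  rw [monomial_eq, C_1, one_mul, Finsupp.prod] at h
  obtain ⟨i, hi, hpow⟩ := hP.prod_mem_iff.mp h
  exact ⟨i, Finsupp.mem_support_iff.mp hi, hP.mem_of_pow_mem _ hpow⟩

theorem exists_mem_eq_zero_of_mem_minimalPrimes [IsDomain R] {P : Ideal (MvPolynomial σ R)}
    (hP : P ∈ (monomialIdeal R S).minimalPrimes) {i : σ} (hi : X i ∈ P) :
    ∃ v ∈ S, v i ≠ 0 ∧ ∀ j, X j ∈ P → j ≠ i → v j = 0 := by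
  by_contra! h
  have := hP.1.1
  let A := {j | X j ∈ P ∧ j ≠ i}
  have hAP : Ideal.span (X '' A) ≤ P := Ideal.span_le.mpr (by rintro _ ⟨j, hj, rfl⟩; exact hj.1)
  have hIA : monomialIdeal R S ≤ Ideal.span (X '' A) := by
    refine Ideal.span_le.mpr ?_
    rintro _ ⟨v, hv, rfl⟩
    obtain ⟨j, hvj, hjP⟩ :=
      exists_X_mem_of_monomial_mem (hP.1.2 (Ideal.subset_span ⟨v, hv, rfl⟩))
    by_cases hji : j = i
    · obtain ⟨k, hkP, hki, hvk⟩ := h v hv (hji ▸ hvj)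
      exact monomial_mem_span_X_image (show k ∈ A from ⟨hkP, hki⟩) hvk _
    · exact monomial_mem_span_X_image (show j ∈ A from ⟨hjP, hji⟩) hvj _
  exact (X_mem_span_X_image_iff.mp (hP.2 ⟨isPrime_span_X_image A, hIA⟩ hAP hi)).2 rfl

theorem one_le_weight_indicator {P : Ideal (MvPolynomial σ R)} [P.IsPrime]
    (hSP : monomialIdeal R S ≤ P) {v : σ →₀ ℕ} (hv : v ∈ S) :
    1 ≤ weight ({i | X i ∈ P}.indicator 1) v := by
  obtain ⟨i, hvi, hiP⟩ := exists_X_mem_of_monomial_mem (hSP (Ideal.subset_span ⟨v, hv, rfl⟩))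
  have := le_weight_of_ne_zero' ({i | X i ∈ P}.indicator (1 : σ → ℕ)) hvi
  rwa [Set.indicator_of_mem (show i ∈ {i | X i ∈ P} from hiP), Pi.one_apply] at this

theorem le_weight_of_mem_pow {w : σ → ℕ} (hS : ∀ v ∈ S, 1 ≤ weight w v) {k : ℕ}
    {y : MvPolynomial σ R} (hy : y ∈ monomialIdeal R S ^ k) {d : σ →₀ ℕ} (hd : d ∈ y.support) :
    k ≤ weight w d := by
  classical
  induction k generalizing y d with
  | zero => exact Nat.zero_le _
  | succ k ih =>
    rw [pow_succ] at hy
    refine Submodule.mul_induction_on (C := fun y => ∀ d ∈ y.support, k + 1 ≤ weight w d)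
      hy (fun a ha b hb d hd => ?_) (fun a b ha hb d hd => ?_) d hd
    · obtain ⟨d₁, hd₁, d₂, hd₂, rfl⟩ := Finset.mem_add.mp (support_mul a b hd)
      obtain ⟨v, hv, hvd⟩ := mem_ideal_span_monomial_image.mp hb d₂ hd₂
      obtain ⟨e, rfl⟩ := le_iff_exists_add.mp hvd
      have := ih ha hd₁
      have := hS v hv
      rw [map_add, map_add]
      omega
    · exact (Finset.mem_union.mp (support_add hd)).elim (ha d) (hb d)

theorem exists_monomial_add_mem_pow (hS : ∀ v ∈ S, ∀ i, v i ≤ 1) {A : Set σ}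
    (hA : ∀ i ∈ A, ∃ v ∈ S, v i ≠ 0 ∧ ∀ j ∈ A, j ≠ i → v j = 0) {m : ℕ} {z : σ →₀ ℕ}
    (hz : m ≤ weight (A.indicator 1) z) :
    ∃ c : σ →₀ ℕ, (∀ j ∈ A, c j = 0) ∧ monomial (c + z) (1 : R) ∈ monomialIdeal R S ^ m := by
  classical
  induction m generalizing z with
  | zero => exact ⟨0, fun _ _ => rfl, by simp⟩
  | succ m ih =>
    obtain ⟨i, hi, hne⟩ := Finset.exists_ne_zero_of_sum_ne_zero
      (show weight (A.indicator 1) z ≠ 0 by omega)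
    have hiA : i ∈ A := Set.mem_of_indicator_ne_zero (right_ne_zero_of_smul hne)
    have hzi : z i ≠ 0 := Finsupp.mem_support_iff.mp hi
    have hw := weight_sub_single_add (w := A.indicator (1 : σ → ℕ)) hzi
    rw [Set.indicator_of_mem hiA, Pi.one_apply] at hw
    obtain ⟨c, hcA, hc⟩ := ih (z := z - single i 1) (by omega)
    obtain ⟨v, hvS, hvi, hvA⟩ := hA i hiA
    -- `v` is `x_i` times a monomial outside `A`; that monomial is appended to `c`
    refine ⟨c + (v - single i 1), fun j hj => ?_, ?_⟩
    · by_cases hji : j = i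
      · subst hji
        simp [hcA j hj, hS v hvS j]
      · simp [hcA j hj, hvA j hj hji, Ne.symm hji]
    · have hsum : c + (v - single i 1) + z = c + (z - single i 1) + v :=
        calc c + (v - single i 1) + z
            = c + (v - single i 1) + (z - single i 1 + single i 1) := by
              rw [sub_add_single_one_cancel hzi]
          _ = c + (z - single i 1) + (v - single i 1 + single i 1) := by ac_rfl
          _ = c + (z - single i 1) + v := by rw [sub_add_single_one_cancel hvi]
      rw [hsum, ← one_mul (1 : R), ← monomial_mul, pow_succ]
      exact Ideal.mul_mem_mul hc (Ideal.subset_span ⟨v, hvS, rfl⟩)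

variable [IsDomain R] [IsNoetherianRing R] [Finite σ]

/-- `weight ({i | X i ∈ P}.indicator 1) z` is the order of `x^z` along `P`: this is the monomial
case of `I^(m) = ⋂ P^m`. -/
theorem monomial_mem_symbPow (hS : ∀ v ∈ S, ∀ i, v i ≤ 1) {m : ℕ} {z : σ →₀ ℕ}
    (hz : ∀ P ∈ (monomialIdeal R S).minimalPrimes,
      m ≤ weight ({i | X i ∈ P}.indicator (1 : σ → ℕ)) z) (c : R) :
    monomial z c ∈ (monomialIdeal R S).symbPow m := by
  refine Ideal.mem_symbPow_of_forall_minimalPrimes fun P hP => ?_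
  have := hP.1.1
  obtain ⟨e, heP, he⟩ := exists_monomial_add_mem_pow (R := R) hS
    (fun i hi => exists_mem_eq_zero_of_mem_minimalPrimes hP hi) (hz P hP)
  refine ⟨monomial e 1, fun h => ?_, ?_⟩
  · obtain ⟨i, hei, hiP⟩ := exists_X_mem_of_monomial_mem h
    exact hei (heP i hiP)
  · rw [monomial_mul, one_mul, ← mul_one c, ← C_mul_monomial]
    exact Ideal.mul_mem_left _ _ he

theorem frobeniusSplitting_mem_symbPow (hS : ∀ v ∈ S, ∀ i, v i ≤ 1) {p : ℕ} (hp : p ≠ 0)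
    (θ : R →+ R) {n : ℕ} {y : MvPolynomial σ R} (hy : y ∈ monomialIdeal R S ^ (n * p + 1)) :
    frobeniusSplitting p θ y ∈ (monomialIdeal R S).symbPow (n + 1) := by
  rw [← support_sum_monomial_coeff y, map_sum]
  refine Ideal.sum_mem _ fun d hd => ?_
  by_cases hdvd : ∀ i, p ∣ d i
  · obtain ⟨z, rfl⟩ := exists_eq_nsmul_of_forall_dvd hdvd
    rw [frobeniusSplitting_monomial_nsmul θ hp]
    refine monomial_mem_symbPow hS (fun P hP => ?_) _
    have := hP.1.1
    have hle := le_weight_of_mem_pow (fun v => one_le_weight_indicator hP.1.2) hy hd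
    rw [map_nsmul, smul_eq_mul] at hle
    exact Nat.lt_of_mul_lt_mul_left (a := p) (by linarith)
  · rw [frobeniusSplitting_monomial_of_not_dvd θ hdvd]
    exact Ideal.zero_mem _

end MvPolynomial

theorem squarefree_monomial_symbolic_fpure_general
    (K : Type*) [Field K] (p r : ℕ) (hp : p.Prime) [CharP K p]
    (S : Set (Fin r →₀ ℕ)) (hS : ∀ v ∈ S, ∀ i, v i ≤ 1)
    (I : Ideal (MvPolynomial (Fin r) K))
    (hI : I = Ideal.span ((fun v => (MvPolynomial.monomial v (1 : K))) '' S)) :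
    IsFPureFiltration p (fun n => I.symbPow n) := by
  have := Fact.mk hp
  obtain ⟨θ, hθ⟩ := exists_isFrobeniusSplitting K p
  subst hI
  exact Ideal.isFPureFiltration_symbPow hp.ne_zero hθ.mvPolynomial
    fun n y hy => frobeniusSplitting_mem_symbPow hS hp.ne_zero θ hy

/-- A square-free monomial ideal in a polynomial ring over an `F`-finite field
of characteristic `p` is symbolic `F`-pure: there is a Frobenius splitting `φ` with
`φ((I^{(np+1)})^{1/p}) ⊆ I^{(n+1)}` for all `n ≥ 0`. -/
theorem squarefree_monomial_symbolic_fpure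
    (K : Type*) [Field K] (p r : ℕ) (hp : p.Prime) [CharP K p]
    (hFF : IsFFiniteRing p K)
    (S : Set (Fin r →₀ ℕ)) (hS : ∀ v ∈ S, ∀ i, v i ≤ 1)
    (I : Ideal (MvPolynomial (Fin r) K))
    (hI : I = Ideal.span ((fun v => (MvPolynomial.monomial v (1 : K))) '' S)) :
    IsFPureFiltration p (fun n => I.symbPow n) :=
  squarefree_monomial_symbolic_fpure_general K p r hp S hS I hI
end
end

section
/- Let R be a regular ring and I a radical ideal of R. Then I^n = I^{(n)} for every n ≥ 0 if and only if the associated graded ring gr_I(R) = ⊕_{n≥0} I^n/I^{n+1} is torsion-free as an R/I-module, and this holds if and only if Ass_R(R/I^n) ⊆ Ass_R(R/I) for all n. -/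
/-! Over a Noetherian ring the zero divisors on a module form the union of its associated primes.
Hence, by prime avoidance, the associated primes of a module killed by a power of `I` are all
minimal over `I` iff every element outside the minimal primes of `I` acts injectively on it.
On `R ⧸ Iⁿ` this injectivity says `I⁽ⁿ⁾ ⊆ Iⁿ`; on the graded piece `Iⁿ/Iⁿ⁺¹` it says
`I⁽ⁿ⁺¹⁾ ∩ Iⁿ ⊆ Iⁿ⁺¹`, and by induction on `n` this holds for all `n` iff `I⁽ⁿ⁾ = Iⁿ` for all `n`.
Finally, for radical `I` the associated primes of `R ⧸ I` are exactly its minimal primes. -/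

set_option maxHeartbeats 1000000
set_option synthInstance.maxHeartbeats 400000

noncomputable section

open scoped DirectSum

/-- A Noetherian local ring is regular if its maximal ideal is generated by `dim` elements. -/
def IsRegularLocalRingD (A : Type*) [CommRing A] [IsLocalRing A] : Prop :=
  IsNoetherianRing A ∧ ∃ s : Finset A, Ideal.span (s : Set A) = IsLocalRing.maximalIdeal A ∧
    (s.card : WithBot ℕ∞) = ringKrullDim A

/-- A commutative ring is regular if all its localizations at primes are regular local rings. -/
def IsRegularRingD (R : Type*) [CommRing R] : Prop :=
  ∀ (P : Ideal R) [P.IsPrime], IsRegularLocalRingD (Localization.AtPrime P)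

theorem DirectSum.isSMulRegular_iff {S ι : Type*} [Semiring S] {M : ι → Type*}
    [∀ i, AddCommMonoid (M i)] [∀ i, Module S (M i)] {s : S} :
    IsSMulRegular (⨁ i, M i) s ↔ ∀ i, IsSMulRegular (M i) s := by
  classical
  refine ⟨fun h i x y hxy => DirectSum.of_injective i (h ?_), fun h x y hxy => ?_⟩
  · simpa only [← DirectSum.lof_eq_of S, ← map_smul] using congrArg (DirectSum.lof S ι M i) hxy
  · exact DFinsupp.ext fun i =>
      h i (by simpa only [DirectSum.smul_apply] using DFinsupp.ext_iff.mp hxy i)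

section

variable {R : Type*} [CommRing R]

lemma Ideal.pow_le_symbPow_s11 (I : Ideal R) (n : ℕ) : I ^ n ≤ I.symbPow n :=
  fun r hr => ⟨1, fun P hP => hP.1.1.one_notMem, by rwa [one_mul]⟩

lemma Ideal.symbPow_le_pow_iff {I : Ideal R} {n : ℕ} :
    I.symbPow n ≤ I ^ n ↔
      ∀ s, (∀ P ∈ I.minimalPrimes, s ∉ P) → IsSMulRegular (R ⧸ I ^ n) s := by
  simp only [isSMulRegular_quotient_iff_mem_of_smul_mem, smul_eq_mul]
  exact ⟨fun h s hs r hr => h ⟨s, hs, hr⟩, fun h r ⟨s, hs, hr⟩ => h s hs r hr⟩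

lemma Ideal.exists_mem_forall_notMem_minimalPrimes [IsNoetherianRing R] {I P : Ideal R}
    [hP : P.IsPrime] (hIP : I ≤ P) (hmin : P ∉ I.minimalPrimes) :
    ∃ s ∈ P, ∀ Q ∈ I.minimalPrimes, s ∉ Q := by
  by_contra! hcover
  have hfin := I.finite_minimalPrimes_of_isNoetherianRing R
  have hsub : (P : Set R) ⊆ ⋃ Q ∈ (hfin.toFinset : Set (Ideal R)), (Q : Set R) := fun s hs => by
    obtain ⟨Q, hQ, hsQ⟩ := hcover s hs
    exact Set.mem_biUnion (hfin.mem_toFinset.mpr hQ) hsQ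
  obtain ⟨Q, hQ, hPQ⟩ := (Ideal.subset_union_prime P P fun Q hQ _ _ =>
    (hfin.mem_toFinset.mp hQ).1.1).mp hsub
  rw [Set.Finite.mem_toFinset] at hQ
  exact hmin (le_antisymm hPQ (hQ.2 ⟨hP, hIP⟩ hPQ) ▸ hQ)

theorem associatedPrimes_subset_minimalPrimes_iff [IsNoetherianRing R] {I : Ideal R}
    {M : Type*} [AddCommGroup M] [Module R M] {n : ℕ} (hM : I ^ n ≤ Module.annihilator R M) :
    associatedPrimes R M ⊆ I.minimalPrimes ↔
      ∀ s, (∀ P ∈ I.minimalPrimes, s ∉ P) → IsSMulRegular M s := by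
  have hzd := biUnion_associatedPrimes_eq_compl_regular R M
  constructor
  · intro h s hs
    by_contra hreg
    have hzero : s ∈ ⋃ P ∈ associatedPrimes R M, P := hzd.symm ▸ hreg
    obtain ⟨P, hP, hsP⟩ := Set.mem_iUnion₂.mp hzero
    exact hs P (h hP) hsP
  · intro h P hP
    have := hP.isPrime
    have hIP : I ≤ P := this.le_of_pow_le <|
      hM.trans ((Submodule.annihilator_top (R := R) (M := M)) ▸ hP.annihilator_le)
    by_contra hmin
    obtain ⟨s, hsP, hs⟩ := Ideal.exists_mem_forall_notMem_minimalPrimes hIP hmin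
    have hzero : s ∈ ⋃ P ∈ associatedPrimes R M, P := Set.mem_biUnion hP hsP
    exact (hzd ▸ hzero) (h s hs)

lemma Ideal.IsRadical.associatedPrimes_quotient_eq [IsNoetherianRing R] {I : Ideal R}
    (hI : I.IsRadical) : associatedPrimes R (R ⧸ I) = I.minimalPrimes := by
  refine subset_antisymm ?_ ?_
  · have hann : I ^ 1 ≤ Module.annihilator R (R ⧸ I) := by
      rw [pow_one, Ideal.annihilator_quotient]
    refine (associatedPrimes_subset_minimalPrimes_iff hann).mpr fun s hs => ?_
    rw [isSMulRegular_quotient_iff_mem_of_smul_mem]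
    intro r hsr
    rw [← hI.radical, ← Ideal.sInf_minimalPrimes, Submodule.mem_sInf] at hsr ⊢
    exact fun Q hQ => (hQ.1.1.mem_or_mem (hsr Q hQ)).resolve_left (hs Q hQ)
  · simpa only [Ideal.annihilator_quotient] using
      Module.associatedPrimes.minimalPrimes_annihilator_subset_associatedPrimes R (R ⧸ I)

abbrev Ideal.gradedPiece (I : Ideal R) (n : ℕ) : Type _ :=
  ↥(I ^ n) ⧸ Submodule.comap (I ^ n : Submodule R R).subtype (I ^ (n + 1) : Submodule R R)

lemma Ideal.le_annihilator_gradedPiece (I : Ideal R) (n : ℕ) :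
    I ≤ Module.annihilator R (I.gradedPiece n) := by
  intro a ha
  rw [Module.mem_annihilator]
  intro m
  obtain ⟨⟨x, hx⟩, rfl⟩ := Submodule.Quotient.mk_surjective _ m
  rw [← Submodule.Quotient.mk_smul, Submodule.Quotient.mk_eq_zero, Submodule.mem_comap]
  show a * x ∈ I ^ (n + 1)
  rw [pow_succ']
  exact Ideal.mul_mem_mul ha hx

lemma Ideal.isSMulRegular_gradedPiece_iff {I : Ideal R} {n : ℕ} {s : R} :
    IsSMulRegular (I.gradedPiece n) s ↔ ∀ x ∈ I ^ n, s * x ∈ I ^ (n + 1) → x ∈ I ^ (n + 1) := by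
  simp only [isSMulRegular_quotient_iff_mem_of_smul_mem, Submodule.mem_comap, Subtype.forall,
    Submodule.coe_subtype, SetLike.val_smul, smul_eq_mul]

lemma Ideal.forall_symbPow_le_pow_iff {I : Ideal R} :
    (∀ n, I.symbPow n ≤ I ^ n) ↔
      ∀ s, (∀ P ∈ I.minimalPrimes, s ∉ P) → ∀ n, IsSMulRegular (I.gradedPiece n) s := by
  simp only [Ideal.isSMulRegular_gradedPiece_iff]
  refine ⟨fun h s hs n x _ hsx => h (n + 1) ⟨s, hs, hsx⟩, fun h n => ?_⟩
  induction n with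
  | zero => simp
  | succ n ih =>
    rintro r ⟨s, hs, hsr⟩
    exact h s hs n r (ih ⟨s, hs, Ideal.pow_le_pow_right n.le_succ hsr⟩) hsr

lemma Ideal.le_annihilator_directSum_gradedPiece (I : Ideal R) :
    I ≤ Module.annihilator R (⨁ n : ℕ, I.gradedPiece n) := by
  intro a ha
  rw [Module.mem_annihilator]
  intro x
  ext n
  rw [DirectSum.smul_apply, DirectSum.zero_apply]
  exact Module.mem_annihilator.mp (I.le_annihilator_gradedPiece n ha) (x n)

end

theorem ordinary_eq_symbolic_iff_torsionfree_general
    {R : Type*} [CommRing R] [IsNoetherianRing R]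
    (I : Ideal R) (hrad : I.IsRadical) :
    ((∀ n : ℕ, I ^ n = I.symbPow n) ↔
      ∀ P ∈ associatedPrimes R
        (⨁ n : ℕ, (↥(I ^ n) ⧸
          Submodule.comap (I ^ n : Submodule R R).subtype (I ^ (n + 1) : Submodule R R))),
        P ∈ I.minimalPrimes)
    ∧ ((∀ n : ℕ, I ^ n = I.symbPow n) ↔
      ∀ n : ℕ, associatedPrimes R (R ⧸ I ^ n) ⊆ associatedPrimes R (R ⧸ I)) := by
  have hpow : (∀ n : ℕ, I ^ n = I.symbPow n) ↔ ∀ n : ℕ, I.symbPow n ≤ I ^ n :=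
    forall_congr' fun n => le_antisymm_iff.trans (and_iff_right (I.pow_le_symbPow_s11 n))
  refine ⟨?_, ?_⟩
  · rw [hpow, Ideal.forall_symbPow_le_pow_iff]
    refine Iff.trans ?_ (associatedPrimes_subset_minimalPrimes_iff (n := 1)
      (M := ⨁ n : ℕ, I.gradedPiece n) ?_).symm
    · simp only [DirectSum.isSMulRegular_iff]
    · exact (pow_one I).trans_le I.le_annihilator_directSum_gradedPiece
  · rw [hpow, hrad.associatedPrimes_quotient_eq]
    refine forall_congr' fun n => Ideal.symbPow_le_pow_iff.trans ?_
    refine (associatedPrimes_subset_minimalPrimes_iff (n := n) ?_).symm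
    rw [Ideal.annihilator_quotient]

/-- For a radical ideal `I` in a regular (Noetherian) ring `R`:
`Iⁿ = I^{(n)}` for all `n` iff the associated graded ring `⊕ₙ Iⁿ/Iⁿ⁺¹` is torsion-free over
`R/I` (every associated prime of it is a minimal prime of `I`), iff
`Ass(R/Iⁿ) ⊆ Ass(R/I)` for all `n`. -/
theorem ordinary_eq_symbolic_iff_torsionfree
    {R : Type*} [CommRing R] [IsNoetherianRing R] (hreg : IsRegularRingD R)
    (I : Ideal R) (hrad : I.IsRadical) :
    ((∀ n : ℕ, I ^ n = I.symbPow n) ↔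
      ∀ P ∈ associatedPrimes R
        (⨁ n : ℕ, (↥(I ^ n) ⧸
          Submodule.comap (I ^ n : Submodule R R).subtype (I ^ (n + 1) : Submodule R R))),
        P ∈ I.minimalPrimes)
    ∧ ((∀ n : ℕ, I ^ n = I.symbPow n) ↔
      ∀ n : ℕ, associatedPrimes R (R ⧸ I ^ n) ⊆ associatedPrimes R (R ⧸ I)) :=
  ordinary_eq_symbolic_iff_torsionfree_general I hrad
end
end
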